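/- arXiv:2603.09903 — 8 statements merged into one kernel-verified Lean document; each statement's English description precedes it below -/
import Mathlib

section
/- Let C be a category and let R be a class of morphisms of C closed under isomorphism in the arrow category Arrow(C); regard R as a full subcategory of Arrow(C). Then R is the right class of an orthogonal factorization system on C if and only if the following three conditions hold: (1) the full subcategory inclusion R ↪ Arrow(C) admits a left adjoint (reflector) L; (2) for every morphism f of C, the target functor Arrow(C) → C sends the unit component f → L(f) to an isomorphism; (3) the morphisms of C belonging to R are closed under composition. Moreover, when these conditions hold, a morphism f : X → Y of C is left orthogonal to every member of R if and only if the morphism (f, id_Y) : f → id_Y of Arrow(C) is sent to an isomorphism by the reflector L. -/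
/-! For a morphism `k : a ⟶ a'` of arrows, `L k` is invertible iff every arrow `g ∈ R` sees `k`
as a bijection `Hom(a', g) → Hom(a, g)`; for `k = (f, 𝟙) : f ⟶ 𝟙_Y` this bijectivity is exactly
`f ⊥ g`, which is the second part.

Given an OFS, each factorization `f = l ≫ r` gives the reflection `(l, 𝟙) : f ⟶ r`, and `R` is
closed under composition because it is the right orthogonal of `L`. Conversely, the unit of the
reflector factors `f = e ≫ r` with `r ∈ R`; reflecting `e = e' ≫ r'` once more and using
`r' ≫ r ∈ R`, the uniqueness of reflections makes `r'` invertible, so `e ⊥ R`. Hence the morphisms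
left orthogonal to `R` form the left class; `R` is closed under retracts because `e` is invertible
as soon as `e ⊥ r` and `e ⊥ e ≫ r`. -/

open CategoryTheory

universe v u

/-- `f` is left orthogonal to `g`: every commutative square from `f` to `g` admits a
unique diagonal filler. -/
def LeftOrthogonal {C : Type u} [Category.{v} C] {X Y A B : C} (f : X ⟶ Y) (g : A ⟶ B) : Prop :=
  ∀ (u : X ⟶ A) (v : Y ⟶ B), u ≫ g = f ≫ v → ∃! d : Y ⟶ A, f ≫ d = u ∧ d ≫ g = v

/-- `(L, R)` is an orthogonal factorization system on `C`. -/
structure IsOFS {C : Type u} [Category.{v} C] (L R : MorphismProperty C) : Prop where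
  retract_left : ∀ (a b : Arrow C) (i : a ⟶ b) (r : b ⟶ a), i ≫ r = 𝟙 a → L b.hom → L a.hom
  retract_right : ∀ (a b : Arrow C) (i : a ⟶ b) (r : b ⟶ a), i ≫ r = 𝟙 a → R b.hom → R a.hom
  factor : ∀ {X Y : C} (f : X ⟶ Y),
    ∃ (Z : C) (l : X ⟶ Z) (r : Z ⟶ Y), L l ∧ R r ∧ l ≫ r = f
  orth : ∀ {X Y A B : C} (f : X ⟶ Y) (g : A ⟶ B), L f → R g → LeftOrthogonal f g

namespace LeftOrthogonal

variable {C : Type u} [Category.{v} C]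

lemma comp_right {X Y A B D : C} {f : X ⟶ Y} {g : A ⟶ B} {h : B ⟶ D}
    (hg : LeftOrthogonal f g) (hh : LeftOrthogonal f h) : LeftOrthogonal f (g ≫ h) := by
  intro u v hsq
  obtain ⟨d₁, ⟨hd₁u, hd₁v⟩, hd₁⟩ := hh (u ≫ g) v (by simpa using hsq)
  obtain ⟨d₂, ⟨hd₂u, hd₂v⟩, hd₂⟩ := hg u d₁ hd₁u.symm
  refine ⟨d₂, ⟨hd₂u, by rw [← Category.assoc, hd₂v, hd₁v]⟩, fun d ⟨hdu, hdv⟩ => hd₂ d ⟨hdu, ?_⟩⟩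
  exact hd₁ (d ≫ g) ⟨by rw [← Category.assoc, hdu], by simpa using hdv⟩

lemma of_retract_left {a b : Arrow C} (i : a ⟶ b) (p : b ⟶ a) (hip : i ≫ p = 𝟙 a)
    {A B : C} {g : A ⟶ B} (hb : LeftOrthogonal b.hom g) : LeftOrthogonal a.hom g := by
  have hipl : i.left ≫ p.left = 𝟙 a.left := by simpa using Arrow.hom.congr_left hip
  have hipr : i.right ≫ p.right = 𝟙 a.right := by simpa using Arrow.hom.congr_right hip
  intro u v hsq
  obtain ⟨d, ⟨hdu, hdv⟩, hd⟩ := hb (p.left ≫ u) (p.right ≫ v)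
    (by rw [Category.assoc, hsq, ← Category.assoc, Arrow.w p, Category.assoc])
  refine ⟨i.right ≫ d, ⟨?_, ?_⟩, fun d' ⟨hd'u, hd'v⟩ => ?_⟩
  · rw [← Category.assoc, ← Arrow.w i, Category.assoc, hdu, ← Category.assoc, hipl,
      Category.id_comp]
  · rw [Category.assoc, hdv, ← Category.assoc, hipr, Category.id_comp]
  · have : p.right ≫ d' = d := hd _
      ⟨by rw [← Category.assoc, ← Arrow.w p, Category.assoc, hd'u],
        by rw [Category.assoc, hd'v]⟩
    rw [← this, ← Category.assoc, hipr, Category.id_comp]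

lemma of_retract_right {X Y : C} {f : X ⟶ Y} {a b : Arrow C} (i : a ⟶ b) (p : b ⟶ a)
    (hip : i ≫ p = 𝟙 a) (hb : LeftOrthogonal f b.hom) : LeftOrthogonal f a.hom := by
  have hipl : i.left ≫ p.left = 𝟙 a.left := by simpa using Arrow.hom.congr_left hip
  have hipr : i.right ≫ p.right = 𝟙 a.right := by simpa using Arrow.hom.congr_right hip
  intro u v hsq
  obtain ⟨d, ⟨hdu, hdv⟩, hd⟩ := hb (u ≫ i.left) (v ≫ i.right)
    (by rw [Category.assoc, Arrow.w i, ← Category.assoc, hsq, Category.assoc])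
  refine ⟨d ≫ p.left, ⟨?_, ?_⟩, fun d' ⟨hd'u, hd'v⟩ => ?_⟩
  · rw [← Category.assoc, hdu, Category.assoc, hipl, Category.comp_id]
  · rw [Category.assoc, Arrow.w p, ← Category.assoc, hdv, Category.assoc, hipr,
      Category.comp_id]
  · have : d' ≫ i.left = d := hd _
      ⟨by rw [← Category.assoc, hd'u],
        by rw [Category.assoc, Arrow.w i, ← Category.assoc, hd'v]⟩
    rw [← this, Category.assoc, hipl, Category.comp_id]

lemma isIso_of_comp {X Z Y : C} {e : X ⟶ Z} {r : Z ⟶ Y} (he : LeftOrthogonal e (e ≫ r))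
    (hr : LeftOrthogonal e r) : IsIso e := by
  obtain ⟨d, ⟨hed, hdr⟩, -⟩ := he (𝟙 X) r (Category.id_comp _)
  refine ⟨d, hed, (hr e r rfl).unique ⟨?_, ?_⟩ ⟨Category.comp_id e, Category.id_comp r⟩⟩
  · rw [← Category.assoc, hed, Category.id_comp]
  · rw [Category.assoc, hdr]

end LeftOrthogonal

section ArrowHoms

variable {C : Type u} [Category.{v} C]

lemma bijective_homMk_comp_iff {X Y Z A B : C} {f : X ⟶ Y} {e : X ⟶ Z} {r : Z ⟶ Y}
    (w : e ≫ r = f ≫ 𝟙 Y) (g : A ⟶ B) :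
    Function.Bijective (fun ψ : Arrow.mk r ⟶ Arrow.mk g =>
        (Arrow.homMk e (𝟙 Y) w : Arrow.mk f ⟶ Arrow.mk r) ≫ ψ) ↔
      ∀ (u : X ⟶ A) (v : Y ⟶ B), u ≫ g = f ≫ v → ∃! s : Z ⟶ A, e ≫ s = u ∧ s ≫ g = r ≫ v := by
  rw [Function.bijective_iff_existsUnique]
  constructor
  · intro h u v hsq
    obtain ⟨ψ, hψ, hψ'⟩ := h (Arrow.homMk u v hsq)
    have hψr : ψ.right = v := by simpa using Arrow.hom.congr_right hψ
    refine ⟨ψ.left, ⟨Arrow.hom.congr_left hψ, by simp [← hψr]⟩,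
      fun s ⟨hsu, hsv⟩ => ?_⟩
    exact Arrow.hom.congr_left (hψ' (Arrow.homMk s v hsv) (by ext <;> simp [hsu]))
  · intro h φ
    obtain ⟨s, ⟨hsu, hsv⟩, hs⟩ := h φ.left φ.right (Arrow.w φ)
    refine ⟨Arrow.homMk s φ.right hsv, by ext <;> simp [hsu], fun ψ hψ => ?_⟩
    have hψr : ψ.right = φ.right := by simpa using Arrow.hom.congr_right hψ
    ext
    · exact hs ψ.left ⟨Arrow.hom.congr_left hψ, by simp [← hψr]⟩
    · exact hψr

lemma leftOrthogonal_iff_bijective {X Y A B : C} (f : X ⟶ Y) (g : A ⟶ B) :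
    LeftOrthogonal f g ↔ Function.Bijective (fun ψ : Arrow.mk (𝟙 Y) ⟶ Arrow.mk g =>
      (Arrow.homMk (u := f) (v := 𝟙 Y) (by simp) : Arrow.mk f ⟶ Arrow.mk (𝟙 Y)) ≫ ψ) := by
  rw [bijective_homMk_comp_iff]
  simp only [LeftOrthogonal, Arrow.mk_hom, Category.id_comp]

end ArrowHoms

namespace CategoryTheory.Adjunction

lemma bijective_unit_comp {C D : Type*} [Category C] [Category D] {F : C ⥤ D}
    {G : D ⥤ C} (adj : F ⊣ G) (hG : G.FullyFaithful) (X : C) (Y : D) :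
    Function.Bijective (fun ψ : G.obj (F.obj X) ⟶ G.obj Y => adj.unit.app X ≫ ψ) := by
  have hcomp : (fun ψ => adj.unit.app X ≫ ψ) ∘ G.map = adj.homEquiv X Y :=
    funext fun ψ => (adj.homEquiv_unit X Y ψ).symm
  rw [← Function.Bijective.of_comp_iff _ (hG.map_bijective _ _)]
  exact hcomp ▸ (adj.homEquiv X Y).bijective

lemma isIso_map_iff_bijective {C D : Type*} [Category C] [Category D] {F : C ⥤ D} {G : D ⥤ C}
    (adj : F ⊣ G) {a a' : C} (k : a ⟶ a') :
    IsIso (F.map k) ↔ ∀ Y, Function.Bijective (fun ψ : a' ⟶ G.obj Y => k ≫ ψ) := by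
  rw [isIso_iff_coyoneda_map_bijective]
  refine forall_congr' fun Y => ?_
  have : (fun ψ : F.obj a' ⟶ Y => F.map k ≫ ψ) =
      (adj.homEquiv a Y).symm ∘ (fun ψ => k ≫ ψ) ∘ adj.homEquiv a' Y := by
    ext ψ
    simp [Adjunction.homEquiv_naturality_left_symm]
  rw [this, Equiv.comp_bijective, Equiv.bijective_comp]

end CategoryTheory.Adjunction

section Reflection

variable {C : Type u} [Category.{v} C] (R : MorphismProperty C)

/-- `(e, 𝟙) : f ⟶ r` is a reflection of `f` into the full subcategory of arrows in `R`. -/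
def IsReflectiveFactorization {X Z Y : C} (f : X ⟶ Y) (e : X ⟶ Z) (r : Z ⟶ Y) : Prop :=
  R r ∧ e ≫ r = f ∧ ∀ ⦃A B : C⦄ (g : A ⟶ B), R g → ∀ (u : X ⟶ A) (v : Y ⟶ B),
    u ≫ g = f ≫ v → ∃! s : Z ⟶ A, e ≫ s = u ∧ s ≫ g = r ≫ v

def leftOrthogonalClass : MorphismProperty C :=
  fun _ _ f => ∀ ⦃A B : C⦄ (g : A ⟶ B), R g → LeftOrthogonal f g

variable {R}

lemma exists_isReflectiveFactorization (hR : ∀ (a b : Arrow C), (a ≅ b) → R a.hom → R b.hom)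
    {L : Arrow C ⥤ ObjectProperty.FullSubcategory (fun g : Arrow C => R g.hom)}
    (adj : L ⊣ ObjectProperty.ι (fun g : Arrow C => R g.hom))
    (hU : ∀ g : Arrow C, IsIso ((adj.unit.app g).right)) {X Y : C} (f : X ⟶ Y) :
    ∃ (Z : C) (e : X ⟶ Z) (r : Z ⟶ Y), IsReflectiveFactorization R f e r := by
  set ρ := (L.obj (Arrow.mk f)).obj
  set η : Arrow.mk f ⟶ ρ := adj.unit.app (Arrow.mk f)
  let j : ρ ≅ Arrow.mk (ρ.hom ≫ inv η.right) :=
    Arrow.isoMk (Iso.refl _) (asIso η.right).symm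
  have hfac : η.left ≫ ρ.hom ≫ inv η.right = f := by
    rw [← Category.assoc, Arrow.w η]; simp
  refine ⟨ρ.left, η.left, ρ.hom ≫ inv η.right, hR _ _ j (L.obj (Arrow.mk f)).property, hfac,
    fun A B g hg => (bijective_homMk_comp_iff (by simp) g).1 ?_⟩
  have hηj : η ≫ j.hom =
      (Arrow.homMk η.left (𝟙 Y) (by simp) : Arrow.mk f ⟶ Arrow.mk (ρ.hom ≫ inv η.right)) := by
    ext
    · exact Category.comp_id _
    · exact IsIso.hom_inv_id _
  rw [← hηj]
  simp only [Category.assoc]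
  exact (adj.bijective_unit_comp (ObjectProperty.fullyFaithfulι _) _ ⟨Arrow.mk g, hg⟩).comp
    ((isIso_iff_coyoneda_map_bijective j.hom).1 inferInstance _)

end Reflection

namespace IsReflectiveFactorization

variable {C : Type u} [Category.{v} C] {R : MorphismProperty C}

/-- `r'` compares the two reflections `e ≫ r` and `e' ≫ (r' ≫ r)` of `f`. -/
lemma isIso {X Y Z Z' : C} {f : X ⟶ Y} {e : X ⟶ Z} {r : Z ⟶ Y} {e' : X ⟶ Z'} {r' : Z' ⟶ Z}
    (h : IsReflectiveFactorization R f e r) (h' : IsReflectiveFactorization R e e' r')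
    (hComp : ∀ {X Y Z : C} (f : X ⟶ Y) (g : Y ⟶ Z), R f → R g → R (f ≫ g)) :
    IsIso r' := by
  obtain ⟨hr, hf, hrefl⟩ := h
  obtain ⟨hr', he, hrefl'⟩ := h'
  obtain ⟨s, ⟨hes, hsr⟩, -⟩ := hrefl (r' ≫ r) (hComp _ _ hr' hr) e' (𝟙 Y)
    (by rw [← Category.assoc, he, hf, Category.comp_id])
  have hsr' : s ≫ r' = 𝟙 Z :=
    (hrefl r hr e (𝟙 Y) (by rw [hf, Category.comp_id])).unique
      ⟨by rw [← Category.assoc, hes, he], by rw [Category.assoc, hsr]⟩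
      ⟨Category.comp_id e, by simp⟩
  have hr's : r' ≫ s = 𝟙 Z' :=
    (hrefl' r' hr' e' (𝟙 Z) (by rw [he, Category.comp_id])).unique
      ⟨by rw [← Category.assoc, he, hes], by rw [Category.assoc, hsr']⟩
      ⟨Category.comp_id e', by simp⟩
  exact ⟨s, hr's, hsr'⟩

lemma leftOrthogonal {X Z Z' A B : C} {e : X ⟶ Z} {e' : X ⟶ Z'} {r' : Z' ⟶ Z}
    (h : IsReflectiveFactorization R e e' r') [IsIso r'] {g : A ⟶ B} (hg : R g) :
    LeftOrthogonal e g := by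
  obtain ⟨-, he, hrefl⟩ := h
  intro u v hsq
  obtain ⟨s, ⟨hs, hsg⟩, huniq⟩ := hrefl g hg u v hsq
  refine ⟨inv r' ≫ s, ⟨?_, ?_⟩, fun d ⟨hd, hdg⟩ => ?_⟩
  · rw [← he, Category.assoc, IsIso.hom_inv_id_assoc, hs]
  · rw [Category.assoc, hsg, IsIso.inv_hom_id_assoc]
  · rw [← huniq (r' ≫ d) ⟨by rw [← Category.assoc, he, hd], by rw [Category.assoc, hdg]⟩,
      IsIso.inv_hom_id_assoc]

end IsReflectiveFactorization

section Reflective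

variable {C : Type u} [Category.{v} C] {R : MorphismProperty C}
  {L : Arrow C ⥤ ObjectProperty.FullSubcategory (fun g : Arrow C => R g.hom)}

lemma exists_leftOrthogonalClass_factorization
    (hR : ∀ (a b : Arrow C), (a ≅ b) → R a.hom → R b.hom)
    (adj : L ⊣ ObjectProperty.ι (fun g : Arrow C => R g.hom))
    (hU : ∀ g : Arrow C, IsIso ((adj.unit.app g).right))
    (hComp : ∀ {X Y Z : C} (f : X ⟶ Y) (g : Y ⟶ Z), R f → R g → R (f ≫ g)) {X Y : C}
    (f : X ⟶ Y) :
    ∃ (Z : C) (e : X ⟶ Z) (r : Z ⟶ Y), leftOrthogonalClass R e ∧ R r ∧ e ≫ r = f := by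
  obtain ⟨Z, e, r, h⟩ := exists_isReflectiveFactorization hR adj hU f
  obtain ⟨Z', e', r', h'⟩ := exists_isReflectiveFactorization hR adj hU e
  have := h.isIso h' hComp
  exact ⟨Z, e, r, fun _ _ _ hg => h'.leftOrthogonal hg, h.1, h.2.1⟩

lemma isOFS_leftOrthogonalClass (hR : ∀ (a b : Arrow C), (a ≅ b) → R a.hom → R b.hom)
    (adj : L ⊣ ObjectProperty.ι (fun g : Arrow C => R g.hom))
    (hU : ∀ g : Arrow C, IsIso ((adj.unit.app g).right))
    (hComp : ∀ {X Y Z : C} (f : X ⟶ Y) (g : Y ⟶ Z), R f → R g → R (f ≫ g)) :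
    IsOFS (leftOrthogonalClass R) R where
  retract_left _ _ i p hip hb _ _ _ hg := (hb _ hg).of_retract_left i p hip
  retract_right a b i p hip hb := by
    obtain ⟨Z, e, r, he, hr, hf⟩ :=
      exists_leftOrthogonalClass_factorization hR adj hU hComp a.hom
    have : IsIso e := LeftOrthogonal.isIso_of_comp
      (hf ▸ (he _ hb).of_retract_right i p hip) (he _ hr)
    exact hR (Arrow.mk r) a (Arrow.isoMk (asIso e).symm (Iso.refl _) (by simp [← hf])) hr
  factor := exists_leftOrthogonalClass_factorization hR adj hU hComp
  orth _ _ hf hg := hf _ hg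

end Reflective

namespace IsOFS

variable {C : Type u} [Category.{v} C] {L R : MorphismProperty C}

lemma mem_right_of_leftOrthogonal (ofs : IsOFS L R) {A B : C} {g : A ⟶ B}
    (hg : ∀ {X Y : C} (f : X ⟶ Y), L f → LeftOrthogonal f g) : R g := by
  obtain ⟨Z, l, r, hl, hr, hlr⟩ := ofs.factor g
  obtain ⟨d, ⟨hld, hdg⟩, -⟩ := hg l hl (𝟙 A) r (by rw [Category.id_comp, hlr])
  refine ofs.retract_right (Arrow.mk g) (Arrow.mk r) (Arrow.homMk l (𝟙 B) (by simp [hlr]))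
    (Arrow.homMk d (𝟙 B) (by simp [hdg])) ?_ hr
  ext <;> simp [hld]

lemma comp_mem_right (ofs : IsOFS L R) {X Y Z : C} {f : X ⟶ Y} {g : Y ⟶ Z} (hf : R f)
    (hg : R g) : R (f ≫ g) :=
  ofs.mem_right_of_leftOrthogonal fun _ hl => (ofs.orth _ _ hl hf).comp_right (ofs.orth _ _ hl hg)

lemma exists_reflector (ofs : IsOFS L R) :
    ∃ (F : Arrow C ⥤ ObjectProperty.FullSubcategory (fun g : Arrow C => R g.hom))
      (adj : F ⊣ ObjectProperty.ι (fun g : Arrow C => R g.hom)),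
      ∀ a : Arrow C, IsIso ((adj.unit.app a).right) := by
  choose Z l r hl hr hlr using fun a : Arrow C => ofs.factor a.hom
  let ι := ObjectProperty.ι (fun g : Arrow C => R g.hom)
  let η (a : Arrow C) : a ⟶ Arrow.mk (r a) := Arrow.homMk (l a) (𝟙 _) (by simp [hlr])
  have hη (a : Arrow C) (G : ObjectProperty.FullSubcategory (fun g : Arrow C => R g.hom)) :
      Function.Bijective (fun ψ : (⟨Arrow.mk (r a), hr a⟩ : ObjectProperty.FullSubcategory _) ⟶ G =>
        η a ≫ ι.map ψ) := by
    refine Function.Bijective.comp ?_ ((ObjectProperty.fullyFaithfulι _).map_bijective _ _)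
    exact (bijective_homMk_comp_iff _ G.obj.hom).2 fun u v hsq =>
      ofs.orth _ _ (hl a) G.property u (r a ≫ v) (by rw [hsq, ← hlr, Category.assoc])
  let e a G := Equiv.ofBijective _ (hη a G)
  have he : ∀ a G G' (ψ' : G ⟶ G') ψ, e a G' (ψ ≫ ψ') = e a G ψ ≫ ι.map ψ' := by
    intro a G G' ψ' ψ
    simp only [Equiv.ofBijective_apply, Functor.map_comp, Category.assoc, e]
  refine ⟨_, Adjunction.adjunctionOfEquivLeft e he, fun a => ?_⟩
  -- the unit at `a` is `η a ≫ ι.map (𝟙 _)` by construction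
  change IsIso (𝟙 a.right ≫ 𝟙 a.right)
  infer_instance

end IsOFS

lemma forall_leftOrthogonal_iff_isIso_map {C : Type u} [Category.{v} C] {R : MorphismProperty C}
    {L : Arrow C ⥤ ObjectProperty.FullSubcategory (fun g : Arrow C => R g.hom)}
    (adj : L ⊣ ObjectProperty.ι (fun g : Arrow C => R g.hom)) {X Y : C} (f : X ⟶ Y) :
    (∀ {A B : C} (g : A ⟶ B), R g → LeftOrthogonal f g) ↔
      IsIso (L.map (Arrow.homMk (u := f) (v := 𝟙 Y) (by simp) :
        Arrow.mk f ⟶ Arrow.mk (𝟙 Y))) := by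
  rw [adj.isIso_map_iff_bijective]
  exact ⟨fun h G => (leftOrthogonal_iff_bijective f G.obj.hom).1 (h _ G.property),
    fun h _ _ g hg => (leftOrthogonal_iff_bijective f g).2 (h ⟨Arrow.mk g, hg⟩)⟩

/-- A class of morphisms `R`, closed under isomorphism in the arrow category and regarded as a
full subcategory of the arrow category, is the right class of an orthogonal factorization
system if and only if (1) the inclusion admits a left adjoint (reflector), (2) the target
functor inverts the unit, and (3) `R` is closed under composition.  Moreover, in that case a
morphism `f : X ⟶ Y` is left orthogonal to every member of `R` if and only if the reflector
sends the morphism `(f, 𝟙 Y) : f ⟶ 𝟙 Y` of the arrow category to an isomorphism. -/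
theorem stmt1 {C : Type u} [Category.{v} C] (R : MorphismProperty C)
    (hR : ∀ (a b : Arrow C), (a ≅ b) → R a.hom → R b.hom) :
    ((∃ L : MorphismProperty C, IsOFS L R) ↔
      ((∃ (L : Arrow C ⥤ ObjectProperty.FullSubcategory (fun g : Arrow C => R g.hom))
          (adj : L ⊣ ObjectProperty.ι (fun g : Arrow C => R g.hom)),
          ∀ g : Arrow C, IsIso ((adj.unit.app g).right)) ∧
        (∀ {X Y Z : C} (f : X ⟶ Y) (g : Y ⟶ Z), R f → R g → R (f ≫ g)))) ∧
    (∀ (L : Arrow C ⥤ ObjectProperty.FullSubcategory (fun g : Arrow C => R g.hom))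
      (adj : L ⊣ ObjectProperty.ι (fun g : Arrow C => R g.hom)),
      (∀ g : Arrow C, IsIso ((adj.unit.app g).right)) →
      (∀ {X Y Z : C} (f : X ⟶ Y) (g : Y ⟶ Z), R f → R g → R (f ≫ g)) →
      ∀ {X Y : C} (f : X ⟶ Y),
        ((∀ {A B : C} (g : A ⟶ B), R g → LeftOrthogonal f g) ↔
          IsIso (L.map (Arrow.homMk (u := f) (v := 𝟙 Y) (by simp) :
            Arrow.mk f ⟶ Arrow.mk (𝟙 Y))))) := by
  refine ⟨⟨fun ⟨_, ofs⟩ => ⟨ofs.exists_reflector, fun _ _ => ofs.comp_mem_right⟩,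
    fun ⟨⟨_, adj, hU⟩, hComp⟩ => ⟨_, isOFS_leftOrthogonalClass hR adj hU hComp⟩⟩, ?_⟩
  intro _ adj _ _ _ _ f
  exact forall_leftOrthogonal_iff_isIso_map adj f
end

section
/- Let V be a monoidal category equipped with an orthogonal factorization system (L,R) such that the tensor product of any two morphisms in L again lies in L and the tensor product of any two morphisms in R again lies in R. Then the category Mon(V) of monoid objects in V carries an orthogonal factorization system in which a morphism of monoids lies in the left (respectively, right) class precisely when its underlying morphism in V lies in L (respectively, in R); in particular, the forgetful functor Mon(V) → V preserves both classes. -/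
open CategoryTheory MonoidalCategory

universe v u

/-!
A morphism of monoids `f : M ⟶ N` factors in `V` as `l ≫ r` with `l ∈ L`, `r ∈ R`. Since `l ⊗ l`
is again in `L`, the square `(μ ≫ l) ≫ r = (l ⊗ l) ≫ (r ⊗ r) ≫ μ` has a unique diagonal, which
is the multiplication of the middle object, with unit `η ≫ l`. Each monoid axiom then holds
because its two sides are diagonals of one square against `r` and a tensor power of `l` (or
`𝟙 ⊗ l`), and such diagonals are unique. Likewise, the diagonal of a square of monoid morphisms is
multiplicative because both ways around are diagonals of a square against `f ⊗ f`.
-/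

open scoped MonObj

theorem LeftOrthogonal.hom_ext {C : Type u} [Category.{v} C] {X Y A B : C} {f : X ⟶ Y}
    {g : A ⟶ B} (hfg : LeftOrthogonal f g) {d d' : Y ⟶ A} (h₁ : f ≫ d = f ≫ d')
    (h₂ : d ≫ g = d' ≫ g) : d = d' := by
  obtain ⟨_, -, huniq⟩ := hfg (f ≫ d) (d ≫ g) (Category.assoc _ _ _)
  exact (huniq d ⟨rfl, rfl⟩).trans (huniq d' ⟨h₁.symm, h₂.symm⟩).symm

section Factorization

variable {V : Type u} [Category.{v} V] [MonoidalCategory V] {M N Z : V} [MonObj M] [MonObj N]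
  {l : M ⟶ Z} {r : Z ⟶ N} {mu : Z ⊗ Z ⟶ Z}

lemma one_mul_of_factor [IsMonHom (l ≫ r)] (hmu₁ : (l ⊗ₘ l) ≫ mu = μ ≫ l)
    (hmu₂ : mu ≫ r = (r ⊗ₘ r) ≫ μ) (horth : LeftOrthogonal (𝟙_ V ◁ l) r) :
    (η ≫ l) ▷ Z ≫ mu = (λ_ Z).hom := by
  rw [MonoidalCategory.tensorHom_def, Category.assoc] at hmu₁
  rw [MonoidalCategory.tensorHom_def, Category.assoc] at hmu₂
  apply horth.hom_ext
  · simp only [whisker_exchange_assoc, comp_whiskerRight_assoc, hmu₁, MonObj.one_mul_assoc,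
      leftUnitor_naturality]
  · rw [Category.assoc, hmu₂, ← comp_whiskerRight_assoc, Category.assoc, IsMonHom.one_hom,
      ← whisker_exchange_assoc, MonObj.one_mul, leftUnitor_naturality]

lemma mul_one_of_factor [IsMonHom (l ≫ r)] (hmu₁ : (l ⊗ₘ l) ≫ mu = μ ≫ l)
    (hmu₂ : mu ≫ r = (r ⊗ₘ r) ≫ μ) (horth : LeftOrthogonal (l ▷ 𝟙_ V) r) :
    Z ◁ (η ≫ l) ≫ mu = (ρ_ Z).hom := by
  rw [MonoidalCategory.tensorHom_def', Category.assoc] at hmu₁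
  rw [MonoidalCategory.tensorHom_def', Category.assoc] at hmu₂
  apply horth.hom_ext
  · simp only [← whisker_exchange_assoc, whiskerLeft_comp_assoc, hmu₁, MonObj.mul_one_assoc,
      rightUnitor_naturality]
  · rw [Category.assoc, hmu₂, ← whiskerLeft_comp_assoc, Category.assoc, IsMonHom.one_hom,
      whisker_exchange_assoc, MonObj.mul_one, rightUnitor_naturality]

lemma mul_assoc_of_factor (hmu₁ : (l ⊗ₘ l) ≫ mu = μ ≫ l)
    (hmu₂ : mu ≫ r = (r ⊗ₘ r) ≫ μ) (horth : LeftOrthogonal ((l ⊗ₘ l) ⊗ₘ l) r) :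
    mu ▷ Z ≫ mu = (α_ Z Z Z).hom ≫ Z ◁ mu ≫ mu := by
  apply horth.hom_ext
  · calc ((l ⊗ₘ l) ⊗ₘ l) ≫ mu ▷ Z ≫ mu = ((μ ≫ l) ⊗ₘ l) ≫ mu := by
          rw [← tensorHom_id, tensorHom_comp_tensorHom_assoc, hmu₁, Category.comp_id]
      _ = μ ▷ M ≫ (l ⊗ₘ l) ≫ mu := by
          rw [← tensorHom_id, tensorHom_comp_tensorHom_assoc, Category.id_comp]
      _ = (α_ M M M).hom ≫ M ◁ μ ≫ (l ⊗ₘ l) ≫ mu := by rw [hmu₁, MonObj.mul_assoc_assoc]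
      _ = (α_ M M M).hom ≫ (l ⊗ₘ (μ ≫ l)) ≫ mu := by
          rw [← id_tensorHom, tensorHom_comp_tensorHom_assoc, Category.id_comp]
      _ = ((l ⊗ₘ l) ⊗ₘ l) ≫ (α_ Z Z Z).hom ≫ Z ◁ mu ≫ mu := by
          rw [associator_naturality_assoc, ← id_tensorHom, tensorHom_comp_tensorHom_assoc,
            hmu₁, Category.comp_id]
  · calc (mu ▷ Z ≫ mu) ≫ r = ((r ⊗ₘ r) ⊗ₘ r) ≫ μ ▷ N ≫ μ := by
          simp only [Category.assoc, hmu₂, ← tensorHom_id, tensorHom_comp_tensorHom_assoc,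
            Category.id_comp, Category.comp_id]
      _ = ((r ⊗ₘ r) ⊗ₘ r) ≫ (α_ N N N).hom ≫ N ◁ μ ≫ μ := by rw [MonObj.mul_assoc]
      _ = (α_ Z Z Z).hom ≫ (r ⊗ₘ ((r ⊗ₘ r) ≫ μ)) ≫ μ := by
          rw [associator_naturality_assoc, ← id_tensorHom, tensorHom_comp_tensorHom_assoc,
            Category.comp_id]
      _ = ((α_ Z Z Z).hom ≫ Z ◁ mu ≫ mu) ≫ r := by
          rw [Category.assoc, Category.assoc, hmu₂, ← id_tensorHom,
            tensorHom_comp_tensorHom_assoc, Category.id_comp, hmu₂]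

end Factorization

lemma IsOFS.id_mem_left {C : Type u} [Category.{v} C] {L R : MorphismProperty C}
    (h : IsOFS L R) (X : C) : L (𝟙 X) := by
  obtain ⟨Z, l, r, hl, -, hlr⟩ := h.factor (𝟙 X)
  exact h.retract_left (Arrow.mk (𝟙 X)) (Arrow.mk l)
    (Arrow.homMk (u := 𝟙 X) (v := l) (by simp))
    (Arrow.homMk (u := 𝟙 X) (v := r) (by simp [hlr]))
    (by ext <;> simp [hlr]) hl

theorem IsOFS.exists_monObj_of_factor {V : Type u} [Category.{v} V] [MonoidalCategory V]
    {L R : MorphismProperty V} (h : IsOFS L R)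
    (hL : ∀ {X Y X' Y' : V} (f : X ⟶ Y) (g : X' ⟶ Y'), L f → L g → L (f ⊗ₘ g))
    {M N Z : V} [MonObj M] [MonObj N] {l : M ⟶ Z} {r : Z ⟶ N} (hl : L l) (hr : R r)
    [IsMonHom (l ≫ r)] : ∃ _ : MonObj Z, IsMonHom l ∧ IsMonHom r := by
  have hll := hL l l hl hl
  obtain ⟨mu, ⟨hmu₁, hmu₂⟩, -⟩ := h.orth _ r hll hr (μ ≫ l) ((r ⊗ₘ r) ≫ μ) (by
    rw [Category.assoc, IsMonHom.mul_hom (l ≫ r), ← tensorHom_comp_tensorHom_assoc])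
  have hunit_l : L (𝟙_ V ◁ l) := id_tensorHom (𝟙_ V) l ▸ hL _ _ (h.id_mem_left _) hl
  have hl_unit : L (l ▷ 𝟙_ V) := tensorHom_id l (𝟙_ V) ▸ hL _ _ hl (h.id_mem_left _)
  let _ : MonObj Z :=
    { one := η ≫ l
      mul := mu
      one_mul := one_mul_of_factor hmu₁ hmu₂ (h.orth _ _ hunit_l hr)
      mul_one := mul_one_of_factor hmu₁ hmu₂ (h.orth _ _ hl_unit hr)
      mul_assoc := mul_assoc_of_factor hmu₁ hmu₂ (h.orth _ _ (hL _ _ hll hl) hr) }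
  exact ⟨‹_›, ⟨rfl, hmu₁.symm⟩,
    ⟨(Category.assoc _ _ _).trans (IsMonHom.one_hom (l ≫ r)), hmu₂⟩⟩

lemma isMonHom_of_diagonal {V : Type u} [Category.{v} V] [MonoidalCategory V]
    {M N A B : V} [MonObj M] [MonObj N] [MonObj A] [MonObj B] {f : M ⟶ N} {g : A ⟶ B}
    {u : M ⟶ A} {v : N ⟶ B} [IsMonHom f] [IsMonHom g] [IsMonHom u] [IsMonHom v] {d : N ⟶ A}
    (hff : LeftOrthogonal (f ⊗ₘ f) g) (hd₁ : f ≫ d = u) (hd₂ : d ≫ g = v) : IsMonHom d where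
  one_hom := by rw [← IsMonHom.one_hom f, Category.assoc, hd₁, IsMonHom.one_hom]
  mul_hom := hff.hom_ext (by simp [hd₁, ← IsMonHom.mul_hom_assoc f]) (by simp [hd₂])

theorem Mon.leftOrthogonal_of_hom {V : Type u} [Category.{v} V] [MonoidalCategory V]
    {M N A B : Mon V} {f : M ⟶ N} {g : A ⟶ B} (hfg : LeftOrthogonal f.hom g.hom)
    (hff : LeftOrthogonal (f.hom ⊗ₘ f.hom) g.hom) : LeftOrthogonal f g := by
  intro u v hsq
  obtain ⟨d, ⟨hd₁, hd₂⟩, huniq⟩ := hfg u.hom v.hom (congrArg Mon.Hom.hom hsq)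
  have := isMonHom_of_diagonal hff hd₁ hd₂
  exact ⟨Mon.Hom.mk d, ⟨Mon.Hom.ext hd₁, Mon.Hom.ext hd₂⟩,
    fun d' hd' => Mon.Hom.ext <|
      huniq d'.hom ⟨congrArg Mon.Hom.hom hd'.1, congrArg Mon.Hom.hom hd'.2⟩⟩

lemma mem_map_of_retract {C : Type u} [Category.{v} C] {D : Type*} [Category D]
    {P : MorphismProperty D}
    (hP : ∀ (a b : Arrow D) (i : a ⟶ b) (r : b ⟶ a), i ≫ r = 𝟙 a → P b.hom → P a.hom)
    (F : C ⥤ D) (a b : Arrow C) (i : a ⟶ b) (r : b ⟶ a) (hir : i ≫ r = 𝟙 a) :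
    P (F.map b.hom) → P (F.map a.hom) :=
  hP _ _ (F.mapArrow.map i) (F.mapArrow.map r) <| by
    rw [← F.mapArrow.map_comp, hir, F.mapArrow.map_id]

theorem stmt4_general {V : Type u} [Category.{v} V] [MonoidalCategory V]
    (L R : MorphismProperty V) (h : IsOFS L R)
    (hL : ∀ {X Y X' Y' : V} (f : X ⟶ Y) (g : X' ⟶ Y'), L f → L g → L (f ⊗ₘ g)) :
    IsOFS (C := Mon V)
      (fun M N f => L (Mon.Hom.hom f))
      (fun M N f => R (Mon.Hom.hom f)) ∧
    ((∀ {M N : Mon V} (f : M ⟶ N), L (Mon.Hom.hom f) → L ((Mon.forget V).map f)) ∧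
     (∀ {M N : Mon V} (f : M ⟶ N), R (Mon.Hom.hom f) → R ((Mon.forget V).map f))) := by
  refine ⟨⟨mem_map_of_retract h.retract_left (Mon.forget V),
    mem_map_of_retract h.retract_right (Mon.forget V), fun f => ?_,
    fun f g hf hg =>
      Mon.leftOrthogonal_of_hom (h.orth _ _ hf hg) (h.orth _ _ (hL _ _ hf hf) hg)⟩,
    fun _ hf => hf, fun _ hf => hf⟩
  obtain ⟨Z, l, r, hl, hr, hlr⟩ := h.factor f.hom
  have : IsMonHom (l ≫ r) := hlr ▸ inferInstance
  obtain ⟨_, _, _⟩ := h.exists_monObj_of_factor hL hl hr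
  exact ⟨Mon.mk Z, Mon.ofHom l, Mon.ofHom r, hl, hr, Mon.Hom.ext hlr⟩

/-- If `(L, R)` is an orthogonal factorization system on a monoidal category `V` such that
both classes are stable under tensoring of morphisms, then the category `Mon_ V` of monoid
objects in `V` carries an orthogonal factorization system whose left (resp. right) class
consists of the morphisms of monoids whose underlying morphism lies in `L` (resp. `R`);
in particular the forgetful functor `Mon_ V ⥤ V` preserves both classes. -/
theorem stmt4 {V : Type u} [Category.{v} V] [MonoidalCategory V]
    (L R : MorphismProperty V) (h : IsOFS L R)
    (hL : ∀ {X Y X' Y' : V} (f : X ⟶ Y) (g : X' ⟶ Y'), L f → L g → L (f ⊗ₘ g))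
    (hR : ∀ {X Y X' Y' : V} (f : X ⟶ Y) (g : X' ⟶ Y'), R f → R g → R (f ⊗ₘ g)) :
    IsOFS (C := Mon V)
      (fun M N f => L (Mon.Hom.hom f))
      (fun M N f => R (Mon.Hom.hom f)) ∧
    ((∀ {M N : Mon V} (f : M ⟶ N), L (Mon.Hom.hom f) → L ((Mon.forget V).map f)) ∧
     (∀ {M N : Mon V} (f : M ⟶ N), R (Mon.Hom.hom f) → R ((Mon.forget V).map f))) :=
  stmt4_general L R h hL
end

section
/- Let F : C ⇄ C' : G be an adjunction of categories (F left adjoint to G), let (L,R) be an orthogonal factorization system on C, and let (L',R') be an orthogonal factorization system on C' whose right class is R' = { g a morphism of C' : G(g) ∈ R }. If every morphism in R is the image under G of some morphism in R', then a morphism f of C lies in L if and only if F(f) lies in L'. -/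
open CategoryTheory

universe v₁ u₁ v₂ u₂ v u

/-!
In an orthogonal factorization system the left class consists exactly of the morphisms left
orthogonal to the right class. Transposition along `F ⊣ G` shows that `F.map f` is left
orthogonal to `g` iff `f` is left orthogonal to `G.map g`. As `G` sends `R'` into `R` and onto
`R` up to isomorphism of arrows, `f` is left orthogonal to `R` iff `F.map f` is left orthogonal
to `R'`.
-/

lemma IsOFS.left_of_forall_leftOrthogonal {C : Type u} [Category.{v} C]
    {L R : MorphismProperty C} (h : IsOFS L R) {X Y : C} (f : X ⟶ Y)
    (hf : ∀ {A B : C} (g : A ⟶ B), R g → LeftOrthogonal f g) : L f := by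
  obtain ⟨Z, l, r, hl, hr, rfl⟩ := h.factor f
  obtain ⟨d, ⟨hld, hdr⟩, -⟩ := hf r hr l (𝟙 Y) (by simp)
  refine h.retract_left (Arrow.mk (l ≫ r)) (Arrow.mk l)
    (Arrow.homMk (𝟙 X) d (by simpa using hld.symm)) (Arrow.homMk (𝟙 X) r (by simp)) ?_ hl
  ext
  · simp
  · simpa using hdr

lemma CategoryTheory.Adjunction.leftOrthogonal_map_iff {C : Type u₁} [Category.{v₁} C]
    {C' : Type u₂} [Category.{v₂} C'] {F : C ⥤ C'} {G : C' ⥤ C} (adj : F ⊣ G)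
    {X Y : C} {A B : C'} (f : X ⟶ Y) (g : A ⟶ B) :
    LeftOrthogonal (F.map f) g ↔ LeftOrthogonal f (G.map g) := by
  refine Equiv.forall₂_congr (adj.homEquiv X A) (adj.homEquiv Y B) fun {u v} =>
    imp_congr ?square <| (adj.homEquiv Y A).existsUnique_congr fun d => ?filler
  all_goals simp only [← adj.homEquiv_naturality_left, ← adj.homEquiv_naturality_right,
    EmbeddingLike.apply_eq_iff_eq]

lemma leftOrthogonal_congr_right {C : Type u} [Category.{v} C] {X Y : C} (f : X ⟶ Y)
    {a b : Arrow C} (e : a ≅ b) : LeftOrthogonal f a.hom ↔ LeftOrthogonal f b.hom := by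
  have hw : (Comma.leftIso e).hom ≫ b.hom = a.hom ≫ (Comma.rightIso e).hom := Arrow.w e.hom
  refine Equiv.forall₂_congr (Comma.leftIso e).homToEquiv (Comma.rightIso e).homToEquiv
    fun {u v} => imp_congr ?square <|
      (Comma.leftIso e).homToEquiv.existsUnique_congr fun d => ?filler
  all_goals
    simp only [Iso.homToEquiv_apply, Category.assoc, hw]
    simp only [← Category.assoc, Iso.cancel_iso_hom_right]

/-- Let `F ⊣ G` be an adjunction, `(L, R)` an orthogonal factorization system on `C` and
`(L', R')` an orthogonal factorization system on `C'` whose right class consists precisely of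
the morphisms sent by `G` into `R`.  If every morphism of `R` is (up to isomorphism in the
arrow category) the image under `G` of a morphism of `R'`, then a morphism `f` of `C` lies in
`L` if and only if `F.map f` lies in `L'`. -/
theorem stmt5 {C : Type u₁} [Category.{v₁} C] {C' : Type u₂} [Category.{v₂} C']
    (F : C ⥤ C') (G : C' ⥤ C) (adj : F ⊣ G)
    (L R : MorphismProperty C) (h : IsOFS L R)
    (L' R' : MorphismProperty C') (h' : IsOFS L' R')
    (hR' : ∀ {X' Y' : C'} (g : X' ⟶ Y'), R' g ↔ R (G.map g))
    (hsurj : ∀ {X Y : C} (f : X ⟶ Y), R f →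
      ∃ g : Arrow C', R' g.hom ∧ Nonempty (G.mapArrow.obj g ≅ Arrow.mk f)) :
    ∀ {X Y : C} (f : X ⟶ Y), L f ↔ L' (F.map f) := by
  intro X Y f
  constructor
  · intro hf
    refine h'.left_of_forall_leftOrthogonal (F.map f) fun g' hg' => ?_
    exact (adj.leftOrthogonal_map_iff f g').mpr (h.orth f (G.map g') hf ((hR' g').mp hg'))
  · intro hf
    refine h.left_of_forall_leftOrthogonal f fun g hg => ?_
    obtain ⟨g', hg', ⟨e⟩⟩ := hsurj g hg
    exact (leftOrthogonal_congr_right f e).mp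
      ((adj.leftOrthogonal_map_iff f g'.hom).mp (h'.orth (F.map f) g'.hom hf hg'))
end

section
/- Let S be a category and F : S ⥤ Cat a functor such that each category F(s) is equipped with an orthogonal factorization system (L_s, R_s), and such that for every morphism f : s → s' in S the transition functor F(f) carries L_s into L_{s'} and R_s into R_{s'}. Then the Grothendieck construction ∫F carries an orthogonal factorization system in which a morphism (f, φ) : (s,x) → (s',x') (where f : s → s' in S and φ : F(f)(x) → x' in F(s')) lies in the left class precisely when φ ∈ L_{s'}, and lies in the right class precisely when f is an isomorphism in S and φ ∈ R_{s'}. -/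
/-!
A morphism `(f, φ)` of `∫ F` factors through the fiber of its target: writing `φ = l ≫ r` with
`l ∈ L`, `r ∈ R` gives `(f, l)` followed by the vertical morphism `(𝟙, r)`. A morphism `g` of the
right class is, up to the isomorphism `(g.base, 𝟙)`, vertical; and a lifting problem of `(f, φ)`
against a vertical `(𝟙, ψ)` whose bottom edge lies over `t` is the same thing as a lifting
problem of `F(t)(φ)` against `ψ` in the fiber, solvable because `F(t)` preserves `L`.

Closure under retracts then comes for free. In any category, if `L ⊥ R`, every morphism factors
as `L` then `R`, `L` is closed under postcomposition and `R` under precomposition with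
isomorphisms, then a retract `h` of an `L`-map still lifts uniquely against the `R`-part `r` of
its own factorization `h = l ≫ r`, and this forces `r` to be invertible, so `h ∈ L`.
-/

open CategoryTheory

universe v₂ u₂ v₁ u₁ v u

section Orthogonality

variable {C : Type u} [Category.{v} C]

lemma LeftOrthogonal.of_retract_left_s7 {a b : Arrow C} (i : a ⟶ b) (r : b ⟶ a) (hir : i ≫ r = 𝟙 a)
    {A B : C} {g : A ⟶ B} (hb : LeftOrthogonal b.hom g) : LeftOrthogonal a.hom g := by
  have hl : i.left ≫ r.left = 𝟙 a.left := congrArg CommaMorphism.left hir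
  have hr : i.right ≫ r.right = 𝟙 a.right := congrArg CommaMorphism.right hir
  intro u v hsq
  obtain ⟨d, ⟨hd₁, hd₂⟩, hd⟩ := hb (r.left ≫ u) (r.right ≫ v) (by
    rw [Category.assoc, hsq, ← Category.assoc, Arrow.w_mk_right r, Category.assoc])
  refine ⟨i.right ≫ d, ⟨?_, ?_⟩, fun d' ⟨hd'₁, hd'₂⟩ => ?_⟩
  · rw [← Category.assoc, ← Arrow.w i, Category.assoc, hd₁, ← Category.assoc, hl,
      Category.id_comp]
  · rw [Category.assoc, hd₂, ← Category.assoc, hr, Category.id_comp]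
  · have : r.right ≫ d' = d := hd _ ⟨by rw [← Category.assoc, ← Arrow.w r, Category.assoc, hd'₁],
      by rw [Category.assoc, hd'₂]⟩
    rw [← this, ← Category.assoc, hr, Category.id_comp]

lemma LeftOrthogonal.of_retract_right_s7 {a b : Arrow C} (i : a ⟶ b) (r : b ⟶ a)
    (hir : i ≫ r = 𝟙 a) {X Y : C} {f : X ⟶ Y} (hb : LeftOrthogonal f b.hom) :
    LeftOrthogonal f a.hom := by
  have hl : i.left ≫ r.left = 𝟙 a.left := congrArg CommaMorphism.left hir
  have hr : i.right ≫ r.right = 𝟙 a.right := congrArg CommaMorphism.right hir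
  intro u v hsq
  obtain ⟨d, ⟨hd₁, hd₂⟩, hd⟩ := hb (u ≫ i.left) (v ≫ i.right) (by
    rw [Category.assoc, Arrow.w i, ← Category.assoc, hsq, Category.assoc])
  refine ⟨d ≫ r.left, ⟨?_, ?_⟩, fun d' ⟨hd'₁, hd'₂⟩ => ?_⟩
  · rw [← Category.assoc, hd₁, Category.assoc, hl, Category.comp_id]
  · rw [Category.assoc, Arrow.w r, ← Category.assoc, hd₂, Category.assoc, hr, Category.comp_id]
  · have : d' ≫ i.left = d := hd _ ⟨by rw [← Category.assoc, hd'₁],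
      by rw [Category.assoc, Arrow.w i, ← Category.assoc, hd'₂]⟩
    rw [← this, Category.assoc, hl, Category.comp_id]

lemma LeftOrthogonal.isIso_comp {X Y A B A' : C} {f : X ⟶ Y} {g : A ⟶ B} (hfg : LeftOrthogonal f g)
    (e : A' ⟶ A) [IsIso e] : LeftOrthogonal f (e ≫ g) := by
  intro u v hsq
  obtain ⟨d, ⟨hd₁, hd₂⟩, hd⟩ := hfg (u ≫ e) v (by rw [Category.assoc, hsq])
  refine ⟨d ≫ inv e, ⟨by rw [← Category.assoc, hd₁, Category.assoc, IsIso.hom_inv_id,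
    Category.comp_id], by rw [Category.assoc, IsIso.inv_hom_id_assoc, hd₂]⟩,
    fun d' ⟨hd'₁, hd'₂⟩ => ?_⟩
  rw [← hd (d' ≫ e) ⟨by rw [← Category.assoc, hd'₁], by rw [Category.assoc, hd'₂]⟩,
    Category.assoc, IsIso.hom_inv_id, Category.comp_id]

lemma isIso_of_leftOrthogonal_comp_self {X Y Z : C} {l : X ⟶ Z} {r : Z ⟶ Y}
    (hl : LeftOrthogonal l r) (hlr : LeftOrthogonal (l ≫ r) r) : IsIso r := by
  obtain ⟨d, ⟨hd₁, hd₂⟩, -⟩ := hlr l (𝟙 Y) (Category.comp_id _).symm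
  obtain ⟨_, -, hunique⟩ := hl l r rfl
  have hrd : r ≫ d = 𝟙 Z := (hunique _ ⟨by rw [← Category.assoc, hd₁], by
    rw [Category.assoc, hd₂, Category.comp_id]⟩).trans
    (hunique _ ⟨Category.comp_id _, Category.id_comp _⟩).symm
  exact ⟨d, hrd, hd₂⟩

lemma isIso_of_leftOrthogonal_self_comp {X Y Z : C} {l : X ⟶ Z} {r : Z ⟶ Y}
    (hl : LeftOrthogonal l r) (hlr : LeftOrthogonal l (l ≫ r)) : IsIso l := by
  obtain ⟨d, ⟨hd₁, hd₂⟩, -⟩ := hlr (𝟙 X) r (Category.id_comp _)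
  obtain ⟨_, -, hunique⟩ := hl l r rfl
  have hdl : d ≫ l = 𝟙 Z := (hunique _ ⟨by rw [← Category.assoc, hd₁, Category.id_comp], by
    rw [Category.assoc, hd₂]⟩).trans
    (hunique _ ⟨Category.comp_id _, Category.id_comp _⟩).symm
  exact ⟨d, hd₁, hdl⟩

theorem IsOFS.of_factor_of_orth {L R : MorphismProperty C}
    (hL : L.RespectsRight (MorphismProperty.isomorphisms C))
    (hR : R.RespectsLeft (MorphismProperty.isomorphisms C))
    (factor : ∀ {X Y : C} (f : X ⟶ Y), ∃ (Z : C) (l : X ⟶ Z) (r : Z ⟶ Y), L l ∧ R r ∧ l ≫ r = f)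
    (orth : ∀ {X Y A B : C} (f : X ⟶ Y) (g : A ⟶ B), L f → R g → LeftOrthogonal f g) :
    IsOFS L R where
  retract_left a b i r hir hb := by
    obtain ⟨Z, l, r', hl, hr', hlr⟩ := factor a.hom
    have : IsIso r' := isIso_of_leftOrthogonal_comp_self (orth l r' hl hr')
      (hlr ▸ (orth b.hom r' hb hr').of_retract_left_s7 i r hir)
    exact hlr ▸ hL.postcomp r' this l hl
  retract_right a b i r hir hb := by
    obtain ⟨Z, l', r', hl', hr', hlr⟩ := factor a.hom
    have : IsIso l' := isIso_of_leftOrthogonal_self_comp (orth l' r' hl' hr')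
      (hlr ▸ (orth l' b.hom hl' hb).of_retract_right_s7 i r hir)
    exact hlr ▸ hR.precomp l' this r' hr'
  factor := factor
  orth := orth

lemma IsOFS.respectsIso_left {L R : MorphismProperty C} (h : IsOFS L R) : L.RespectsIso :=
  .of_respects_arrow_iso _ fun f g e hf =>
    h.retract_left g f e.inv e.hom e.inv_hom_id hf

lemma IsOFS.respectsIso_right {L R : MorphismProperty C} (h : IsOFS L R) : R.RespectsIso :=
  .of_respects_arrow_iso _ fun f g e hf =>
    h.retract_right g f e.inv e.hom e.inv_hom_id hf

end Orthogonality

namespace CategoryTheory.Grothendieck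

variable {S : Type u₁} [Category.{v₁} S] {F : S ⥤ Cat.{v₂, u₂}}

def fiberwise (P : ∀ s : S, MorphismProperty (F.obj s)) : MorphismProperty (Grothendieck F) :=
  fun _ Y f => P Y.base f.fiber

lemma comp_mk {X Y Z : Grothendieck F} (f : X ⟶ Y) (t : Y.base ⟶ Z.base)
    (φ : (F.map t).toFunctor.obj Y.fiber ⟶ Z.fiber) :
    f ≫ (⟨t, φ⟩ : Y ⟶ Z) = ⟨f.base ≫ t, eqToHom (by simp) ≫ (F.map t).toFunctor.map f.fiber ≫ φ⟩ :=
  rfl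

/- The vertical morphism `⟨𝟙 s, eqToHom _ ≫ ψ⟩` is `(ι F s).map ψ`, spelled out between the
objects `⟨s, a⟩` and `⟨s, b⟩` so that its base is syntactically `𝟙 s`. -/
lemma comp_mk_id {X : Grothendieck F} {s : S} {a b : F.obj s} (h : X ⟶ ⟨s, a⟩) (ψ : a ⟶ b) :
    h ≫ (⟨𝟙 s, eqToHom (by simp) ≫ ψ⟩ : (⟨s, a⟩ : Grothendieck F) ⟶ ⟨s, b⟩) =
      ⟨h.base, h.fiber ≫ ψ⟩ := by
  refine Grothendieck.ext _ _ (Category.comp_id _) ?_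
  rw [comp_fiber, Functor.congr_hom (congrArg Cat.Hom.toFunctor (F.map_id s)) h.fiber,
    Cat.Hom.id_map]
  simp only [Category.assoc, eqToHom_trans_assoc]
  rw [eqToHom_refl, eqToHom_refl]
  simp

lemma isIso_map_fiber_comp_fiber {X Y : Grothendieck F} {p : X ⟶ Y} {q : Y ⟶ X}
    (h : p ≫ q = 𝟙 X) : IsIso ((F.map q.base).toFunctor.map p.fiber ≫ q.fiber) := by
  have hfib := Grothendieck.congr h
  rw [comp_fiber, id_fiber, eqToHom_trans, eqToHom_comp_iff] at hfib
  rw [hfib]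
  infer_instance

/- Both `F(i.base)((inv i).fiber) ≫ i.fiber` and `F((inv i).base)(i.fiber) ≫ (inv i).fiber` are
invertible; the second makes `(inv i).fiber` split epi, so the first factor of the first is both
split epi and mono, hence invertible. -/
instance isIso_fiber {X Y : Grothendieck F} (i : X ⟶ Y) [IsIso i] : IsIso i.fiber := by
  have := isIso_map_fiber_comp_fiber (IsIso.inv_hom_id i)
  have := isIso_map_fiber_comp_fiber (IsIso.hom_inv_id i)
  have : IsSplitEpi (inv i).fiber :=
    .mk' ⟨inv ((F.map (inv i).base).toFunctor.map i.fiber ≫ (inv i).fiber) ≫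
      (F.map (inv i).base).toFunctor.map i.fiber, by simp⟩
  have : Mono ((F.map i.base).toFunctor.map (inv i).fiber) := mono_of_mono _ i.fiber
  have := isIso_of_mono_of_isSplitEpi ((F.map i.base).toFunctor.map (inv i).fiber)
  exact IsIso.of_isIso_comp_left ((F.map i.base).toFunctor.map (inv i).fiber) i.fiber

instance fiberwise_respectsLeft (P : ∀ s : S, MorphismProperty (F.obj s)) [∀ s, (P s).RespectsIso] :
    (fiberwise P).RespectsLeft (MorphismProperty.isomorphisms _) where
  precomp i hi f hf := by
    have : IsIso i := hi
    simp only [fiberwise, comp_fiber]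
    exact MorphismProperty.RespectsIso.precomp _ _ _
      (MorphismProperty.RespectsIso.precomp _ _ _ hf)

lemma fiberwise_respectsRight (P : ∀ s : S, MorphismProperty (F.obj s)) [∀ s, (P s).RespectsIso]
    (hP : ∀ {s s' : S} (t : s ⟶ s') {x y : F.obj s} (φ : x ⟶ y),
      P s φ → P s' ((F.map t).toFunctor.map φ)) :
    (fiberwise P).RespectsRight (MorphismProperty.isomorphisms _) where
  postcomp i hi f hf := by
    have : IsIso i := hi
    simp only [fiberwise, comp_fiber]
    exact MorphismProperty.RespectsIso.precomp _ _ _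
      (MorphismProperty.RespectsIso.postcomp _ _ _ (hP i.base f.fiber hf))

lemma leftOrthogonal_mk_id {X Y : Grothendieck F} (f : X ⟶ Y) {s : S} {a b : F.obj s}
    (ψ : a ⟶ b) (h : ∀ t : Y.base ⟶ s, LeftOrthogonal ((F.map t).toFunctor.map f.fiber) ψ) :
    LeftOrthogonal f (⟨𝟙 s, eqToHom (by simp) ≫ ψ⟩ : (⟨s, a⟩ : Grothendieck F) ⟶ ⟨s, b⟩) := by
  rintro ⟨ub, uφ⟩ ⟨vb, vφ⟩ hsq
  rw [comp_mk_id, comp_mk] at hsq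
  injection hsq with hb hfib
  subst hb
  replace hfib := eq_of_heq hfib
  dsimp only at hfib
  rw [eq_comm, eqToHom_comp_iff] at hfib
  obtain ⟨d, ⟨hd₁, hd₂⟩, hd⟩ := h vb (eqToHom (by simp) ≫ uφ) vφ (by rw [Category.assoc, hfib])
  refine ⟨⟨vb, d⟩, ⟨?_, by rw [comp_mk_id, hd₂]⟩, ?_⟩
  · rw [comp_mk, hd₁, eqToHom_trans_assoc, eqToHom_refl, Category.id_comp]
  rintro ⟨db, d'⟩ ⟨hd'₁, hd'₂⟩
  rw [comp_mk_id] at hd'₂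
  injection hd'₂ with hb h₂
  dsimp only at hb h₂
  subst hb
  rw [comp_mk] at hd'₁
  injection hd'₁ with _ h₁
  rw [hd d' ⟨by rw [← h₁, eqToHom_trans_assoc, eqToHom_refl, Category.id_comp], eq_of_heq h₂⟩]

lemma leftOrthogonal_of_isIso_base {X Y A B : Grothendieck F} (f : X ⟶ Y) (g : A ⟶ B)
    [IsIso g.base]
    (h : ∀ t : Y.base ⟶ B.base, LeftOrthogonal ((F.map t).toFunctor.map f.fiber) g.fiber) :
    LeftOrthogonal f g := by
  let A' : Grothendieck F := ⟨B.base, (F.map g.base).toFunctor.obj A.fiber⟩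
  let e : A ⟶ A' := ⟨g.base, 𝟙 _⟩
  have : IsIso e := (isoMk (Y := A') (asIso g.base) (Iso.refl _)).isIso_hom
  have hg : e ≫ (⟨𝟙 _, eqToHom (by simp [A']) ≫ g.fiber⟩ : A' ⟶ ⟨B.base, B.fiber⟩) = g := by
    rw [comp_mk_id, Category.id_comp]
    rfl
  rw [← hg]
  exact (leftOrthogonal_mk_id f g.fiber h).isIso_comp e

end CategoryTheory.Grothendieck

open Grothendieck in
theorem stmt7_general {S : Type u₁} [Category.{v₁} S] (F : S ⥤ Cat.{v₂, u₂})
    (L R : ∀ s : S, MorphismProperty (F.obj s))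
    (hOFS : ∀ s : S, IsOFS (L s) (R s))
    (hL : ∀ {s s' : S} (f : s ⟶ s') {x y : F.obj s} (φ : x ⟶ y),
      L s φ → L s' ((F.map f).toFunctor.map φ)) :
    IsOFS (C := Grothendieck F)
      (fun X Y f => L Y.base (Grothendieck.Hom.fiber f))
      (fun X Y f => IsIso (Grothendieck.Hom.base f) ∧ R Y.base (Grothendieck.Hom.fiber f)) := by
  have := fun s => (hOFS s).respectsIso_left
  have := fun s => (hOFS s).respectsIso_right
  refine IsOFS.of_factor_of_orth (L := fiberwise L)
    (R := (MorphismProperty.isomorphisms S).inverseImage (forget F) ⊓ fiberwise R)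
    (fiberwise_respectsRight L hL) inferInstance (fun {_ Y} h => ?_) ?_
  · obtain ⟨Z, l, r, hl, hr, hlr⟩ := (hOFS Y.base).factor h.fiber
    refine ⟨⟨Y.base, Z⟩, ⟨h.base, l⟩, ⟨𝟙 Y.base, eqToHom (by simp) ≫ r⟩, hl,
      ⟨(inferInstance : IsIso (𝟙 Y.base)), MorphismProperty.RespectsIso.precomp _ _ _ hr⟩, ?_⟩
    rw [comp_mk_id, hlr]
    rfl
  · rintro _ _ _ _ f g hf ⟨hg, hgR⟩
    have : IsIso g.base := hg
    exact leftOrthogonal_of_isIso_base f g fun t => (hOFS _).orth _ _ (hL t _ hf) hgR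

/-- Given `F : S ⥤ Cat` with an orthogonal factorization system `(L s, R s)` on each fiber
`F.obj s`, preserved by all transition functors, the Grothendieck construction carries an
orthogonal factorization system: a morphism `(f, φ)` lies in the left class iff `φ` lies in
the left class of the target fiber, and in the right class iff `f` is an isomorphism and `φ`
lies in the right class of the target fiber. -/
theorem stmt7 {S : Type u₁} [Category.{v₁} S] (F : S ⥤ Cat.{v₂, u₂})
    (L R : ∀ s : S, MorphismProperty (F.obj s))
    (hOFS : ∀ s : S, IsOFS (L s) (R s))
    (hL : ∀ {s s' : S} (f : s ⟶ s') {x y : F.obj s} (φ : x ⟶ y),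
      L s φ → L s' ((F.map f).toFunctor.map φ))
    (hR : ∀ {s s' : S} (f : s ⟶ s') {x y : F.obj s} (φ : x ⟶ y),
      R s φ → R s' ((F.map f).toFunctor.map φ)) :
    IsOFS (C := Grothendieck F)
      (fun X Y f => L Y.base (Grothendieck.Hom.fiber f))
      (fun X Y f => IsIso (Grothendieck.Hom.base f) ∧ R Y.base (Grothendieck.Hom.fiber f)) :=
  stmt7_general F L R hOFS hL
end

section
/- Let ⋯ → C₂ → C₁ → C₀ be a tower of categories and functors in which every transition functor is surjective on objects and surjective on hom-sets (full). Then for every m ≥ 0 the projection functor from the limit of the tower (the category of strictly compatible families of objects and morphisms) to C_m is surjective on objects and full. If, in addition, every transition functor is faithful, then every projection functor from the limit is also faithful. -/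
open CategoryTheory

universe v u

/-- The strict limit of a tower of categories `⋯ → C₂ → C₁ → C₀`: objects are strictly
compatible families of objects. -/
structure TowerLimit (C : ℕ → Type u) [∀ n, Category.{v} (C n)]
    (T : ∀ n, C (n + 1) ⥤ C n) where
  obj : ∀ n, C n
  compat : ∀ n, (T n).obj (obj (n + 1)) = obj n

namespace TowerLimit

variable {C : ℕ → Type u} [∀ n, Category.{v} (C n)] {T : ∀ n, C (n + 1) ⥤ C n}

/-- Morphisms in the strict limit of a tower of categories: strictly compatible families of
morphisms. -/
@[ext]
structure Hom (X Y : TowerLimit C T) where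
  hom : ∀ n, X.obj n ⟶ Y.obj n
  compat : ∀ n, (T n).map (hom (n + 1)) =
    eqToHom (X.compat n) ≫ hom n ≫ eqToHom (Y.compat n).symm

instance : Category (TowerLimit C T) where
  Hom := Hom
  id X :=
    { hom := fun n => 𝟙 (X.obj n)
      compat := fun n => by simp }
  comp {X Y Z} f g :=
    { hom := fun n => f.hom n ≫ g.hom n
      compat := fun n => by simp [f.compat n, g.compat n] }
  id_comp f := by apply Hom.ext; funext n; exact Category.id_comp _
  comp_id f := by apply Hom.ext; funext n; exact Category.comp_id _
  assoc f g h := by apply Hom.ext; funext n; exact Category.assoc _ _ _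

/-- The projection functor from the strict limit of a tower of categories to its `m`-th
stage. -/
def π (C : ℕ → Type u) [∀ n, Category.{v} (C n)] (T : ∀ n, C (n + 1) ⥤ C n) (m : ℕ) :
    TowerLimit C T ⥤ C m where
  obj X := X.obj m
  map f := f.hom m
  map_id _ := rfl
  map_comp _ _ := rfl

end TowerLimit

/-!
The objects of the limit, and the morphisms between two given objects, are the compatible
families of towers of types: the objects of the `C n`, resp. the hom-sets `P.obj n ⟶ Q.obj n`
with the conjugated maps `T n`. Their transition maps are surjective when the functors are
surjective on objects, resp. full, and injective when the functors are faithful.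

For a tower of types with surjective maps, a point of level `m + 1` is reached by shifting the
tower by one and pushing the resulting family down once, so by induction on `m` everything
reduces to level `0`, where one lifts step by step. Injective maps propagate equality upwards,
and compatibility propagates it downwards.
-/

section TypeTower

variable {X : ℕ → Type*} (f : ∀ n, X (n + 1) → X n)

theorem exists_compatible_family_of_surjective (hf : ∀ n, Function.Surjective (f n)) (m : ℕ)
    (x : X m) : ∃ z : ∀ n, X n, (∀ n, f n (z (n + 1)) = z n) ∧ z m = x := by
  induction m generalizing X with
  | zero =>
    let z : ∀ n, X n := fun n => Nat.rec (motive := X) x (fun n y => (hf n y).choose) n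
    exact ⟨z, fun n => (hf n (z n)).choose_spec, rfl⟩
  | succ m ih =>
    obtain ⟨z, hz, hzm⟩ :=
      ih (X := fun n => X (n + 1)) (fun n => f (n + 1)) (fun n => hf (n + 1)) x
    refine ⟨fun n => Nat.casesOn (motive := X) n (f 0 (z 0)) z, fun n => ?_, hzm⟩
    cases n with
    | zero => rfl
    | succ n => exact hz n

theorem compatible_family_ext_of_injective (hf : ∀ n, Function.Injective (f n))
    {z w : ∀ n, X n} (hz : ∀ n, f n (z (n + 1)) = z n) (hw : ∀ n, f n (w (n + 1)) = w n)
    (m : ℕ) (h : z m = w m) : z = w := by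
  induction m generalizing X with
  | zero =>
    funext n
    induction n with
    | zero => exact h
    | succ n ih => exact hf n (by rw [hz, hw, ih])
  | succ m ih =>
    have hsucc := congrFun (ih (X := fun n => X (n + 1)) (z := fun n => z (n + 1))
      (w := fun n => w (n + 1)) (fun n => f (n + 1)) (fun n => hf (n + 1))
      (fun n => hz (n + 1)) (fun n => hw (n + 1)) h)
    funext n
    cases n with
    | zero => rw [← hz, ← hw, hsucc]
    | succ n => exact hsucc n

end TypeTower

namespace TowerLimit

variable {C : ℕ → Type u} [∀ n, Category.{v} (C n)] {T : ∀ n, C (n + 1) ⥤ C n}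

def transitionHom (P Q : TowerLimit C T) (n : ℕ) (g : P.obj (n + 1) ⟶ Q.obj (n + 1)) :
    P.obj n ⟶ Q.obj n :=
  eqToHom (P.compat n).symm ≫ (T n).map g ≫ eqToHom (Q.compat n)

theorem transitionHom_eq_iff {P Q : TowerLimit C T} {n : ℕ} (g : P.obj (n + 1) ⟶ Q.obj (n + 1))
    (h : P.obj n ⟶ Q.obj n) :
    transitionHom P Q n g = h ↔
      (T n).map g = eqToHom (P.compat n) ≫ h ≫ eqToHom (Q.compat n).symm := by
  simp [transitionHom, ← Category.assoc, eqToHom_comp_iff, comp_eqToHom_iff]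

theorem transitionHom_hom {P Q : TowerLimit C T} (g : P ⟶ Q) (n : ℕ) :
    transitionHom P Q n (g.hom (n + 1)) = g.hom n :=
  (transitionHom_eq_iff _ _).2 (g.compat n)

theorem transitionHom_surjective (hfull : ∀ n, (T n).Full) (P Q : TowerLimit C T) (n : ℕ) :
    Function.Surjective (transitionHom P Q n) := fun h => by
  obtain ⟨g, hg⟩ :=
    (hfull n).map_surjective (eqToHom (P.compat n) ≫ h ≫ eqToHom (Q.compat n).symm)
  exact ⟨g, (transitionHom_eq_iff g h).2 hg⟩

theorem transitionHom_injective (hfaith : ∀ n, (T n).Faithful) (P Q : TowerLimit C T) (n : ℕ) :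
    Function.Injective (transitionHom P Q n) := fun g g' h => by
  simp only [transitionHom, cancel_epi, cancel_mono] at h
  exact (hfaith n).map_injective h

theorem surjective_π_obj (hsurj : ∀ n, Function.Surjective (T n).obj) (m : ℕ) :
    Function.Surjective (π C T m).obj := fun x => by
  obtain ⟨z, hz, hzm⟩ := exists_compatible_family_of_surjective _ hsurj m x
  exact ⟨⟨z, hz⟩, hzm⟩

theorem full_π (hfull : ∀ n, (T n).Full) (m : ℕ) : (π C T m).Full where
  map_surjective {P Q} h := by
    obtain ⟨g, hg, hgm⟩ :=
      exists_compatible_family_of_surjective _ (transitionHom_surjective hfull P Q) m h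
    exact ⟨⟨g, fun n => (transitionHom_eq_iff _ _).1 (hg n)⟩, hgm⟩

theorem faithful_π (hfaith : ∀ n, (T n).Faithful) (m : ℕ) : (π C T m).Faithful where
  map_injective {P Q} g g' h := Hom.ext <|
    compatible_family_ext_of_injective _ (transitionHom_injective hfaith P Q)
      (transitionHom_hom g) (transitionHom_hom g') m h

end TowerLimit

/-- If every transition functor of a tower of categories is surjective on objects and full,
then every projection from the strict limit of the tower is surjective on objects and full;
if moreover every transition functor is faithful, then every projection is faithful. -/
theorem stmt9 {C : ℕ → Type u} [∀ n, Category.{v} (C n)] (T : ∀ n, C (n + 1) ⥤ C n)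
    (hsurj : ∀ n, Function.Surjective (T n).obj)
    (hfull : ∀ n, (T n).Full) :
    (∀ m : ℕ, Function.Surjective (TowerLimit.π C T m).obj ∧ (TowerLimit.π C T m).Full) ∧
    ((∀ n, (T n).Faithful) → ∀ m : ℕ, (TowerLimit.π C T m).Faithful) :=
  ⟨fun m => ⟨TowerLimit.surjective_π_obj hsurj m, TowerLimit.full_π hfull m⟩,
    fun hfaith m => TowerLimit.faithful_π hfaith m⟩
end

section
/- Let S be a category, let F, G : S ⥤ Cat be functors, let α : F ⟶ G be a natural transformation, and let ∫α : ∫F → ∫G denote the induced functor between Grothendieck constructions over S. Then ∫α is an equivalence of categories (respectively: fully faithful; full; faithful; essentially surjective) if and only if for every object s of S the component α_s : F(s) → G(s) is an equivalence of categories (respectively: fully faithful; full; faithful; essentially surjective). -/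
/-!
`∫α` acts on a morphism `(f, φ)` of `∫F` by `α` in the fibre, so faithfulness and fullness of the
components give those of `∫α`; conversely, morphisms of `∫F` lying over an identity are exactly
fibre morphisms. For essential surjectivity, the fibre component of an isomorphism
`∫α (t, x) ≅ (s, y)` is itself invertible and identifies `α_s (F(f) x)` with `y`.
-/

open CategoryTheory

universe v₂ u₂ v₁ u₁

namespace CategoryTheory

lemma Functor.isEquivalence_iff_full_faithful_essSurj {C D : Type*} [Category* C] [Category* D]
    (F : C ⥤ D) : F.IsEquivalence ↔ F.Full ∧ F.Faithful ∧ F.EssSurj :=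
  ⟨fun h => ⟨h.full, h.faithful, h.essSurj⟩, fun ⟨_, _, _⟩ => { }⟩

namespace Grothendieck

variable {S : Type u₁} [Category.{v₁} S] {F G : S ⥤ Cat.{v₂, u₂}}

lemma isIso_fiber_s10 {X Y : Grothendieck F} (f : X ⟶ Y) [IsIso f] : IsIso f.fiber := by
  have hX := Grothendieck.congr (IsIso.hom_inv_id f)
  have hY := Grothendieck.congr (IsIso.inv_hom_id f)
  simp only [comp_fiber, id_fiber, eqToHom_comp_iff] at hX hY
  set u := (F.map f.base).toFunctor.map (inv f).fiber
  set v := (F.map (inv f).base).toFunctor.map f.fiber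
  have : IsIso (u ≫ f.fiber) := by rw [hY]; infer_instance
  have : IsIso (v ≫ (inv f).fiber) := by rw [hX]; infer_instance
  have : IsSplitEpi (inv f).fiber := .mk' ⟨inv (v ≫ (inv f).fiber) ≫ v, by simp⟩
  have : IsSplitMono u := .mk' ⟨f.fiber ≫ inv (u ≫ f.fiber), by
    rw [← Category.assoc, IsIso.hom_inv_id]⟩
  have : IsIso u := isIso_of_mono_of_isSplitEpi u
  exact IsIso.of_isIso_comp_left u f.fiber

lemma exists_ι_map_eq_of_base_eq_id {s : S} {x y : F.obj s}
    (f : (⟨s, x⟩ : Grothendieck F) ⟶ ⟨s, y⟩) (hf : f.base = 𝟙 s) :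
    ∃ φ : x ⟶ y, (ι F s).map φ = f := by
  have hx : x = (F.map f.base).toFunctor.obj x := by rw [hf, F.map_id]; rfl
  refine ⟨eqToHom hx ≫ f.fiber, Grothendieck.ext _ _ hf.symm ?_⟩
  erw [eqToHom_trans_assoc, eqToHom_trans_assoc, eqToHom_refl, Category.id_comp]

lemma map_map_ι_map (α : F ⟶ G) {s : S} {x y : F.obj s} (φ : x ⟶ y) :
    (map α).map ((ι F s).map φ) = (ι G s).map ((α.app s).toFunctor.map φ) :=
  (Category.comp_id _).symm.trans (((ιCompMap α s).hom.naturality φ).trans (Category.id_comp _))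

lemma faithful_map_iff (α : F ⟶ G) :
    (map α).Faithful ↔ ∀ s : S, (α.app s).toFunctor.Faithful := by
  refine ⟨fun _ s => ?_, fun h => ⟨fun {X Y} f f' hff => ?_⟩⟩
  · have := Functor.Faithful.of_iso (ιCompMap α s)
    exact Functor.Faithful.of_comp _ (ι G s)
  · obtain ⟨Xb, Xf⟩ := X
    obtain ⟨Yb, Yf⟩ := Y
    obtain ⟨b, φ⟩ := f
    obtain ⟨b', φ'⟩ := f'
    obtain rfl : b = b' := congrArg Hom.base hff
    have hfib : (eqToHom (α.naturality b).symm).toNatTrans.app Xf ≫ (α.app Yb).toFunctor.map φ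
        = (eqToHom (α.naturality b).symm).toNatTrans.app Xf ≫ (α.app Yb).toFunctor.map φ' :=
      eq_of_heq (Hom.mk.inj hff).2
    rw [Cat.eqToHom_app, cancel_epi] at hfib
    exact congrArg _ ((α.app Yb).toFunctor.map_injective hfib)

lemma full_map_iff (α : F ⟶ G) :
    (map α).Full ↔ ∀ s : S, (α.app s).toFunctor.Full := by
  refine ⟨fun _ s => ⟨fun {x y} ψ => ?_⟩, fun h => ⟨fun {X Y} ψ => ?_⟩⟩
  · obtain ⟨f, hf⟩ := (map α).map_surjective
      (show (map α).obj ⟨s, x⟩ ⟶ (map α).obj ⟨s, y⟩ from (ι G s).map ψ)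
    obtain ⟨φ, rfl⟩ := exists_ι_map_eq_of_base_eq_id f (congrArg Hom.base hf)
    exact ⟨φ, (ι G s).map_injective ((map_map_ι_map α φ).symm.trans hf)⟩
  · have p : (α.app Y.base).toFunctor.obj ((F.map ψ.base).toFunctor.obj X.fiber)
        = (G.map ψ.base).toFunctor.obj ((α.app X.base).toFunctor.obj X.fiber) :=
      Functor.congr_obj (congrArg Cat.Hom.toFunctor (α.naturality ψ.base)) X.fiber
    refine ⟨⟨ψ.base, (α.app Y.base).toFunctor.preimage (eqToHom p ≫ ψ.fiber)⟩, ?_⟩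
    fapply Grothendieck.ext
    · rfl
    · simp only [map_map_fiber, Functor.map_preimage]
      erw [eqToHom_trans_assoc, eqToHom_trans_assoc, eqToHom_refl, Category.id_comp]

lemma essSurj_map_iff (α : F ⟶ G) :
    (map α).EssSurj ↔ ∀ s : S, (α.app s).toFunctor.EssSurj := by
  refine ⟨fun _ s => ⟨fun y => ?_⟩, fun h => ⟨fun Y => ?_⟩⟩
  · let X := (map α).objPreimage ⟨s, y⟩
    let e := (map α).objObjPreimageIso ⟨s, y⟩
    have hX : (α.app s).toFunctor.obj ((F.map e.hom.base).toFunctor.obj X.fiber)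
        = (G.map e.hom.base).toFunctor.obj ((α.app X.base).toFunctor.obj X.fiber) :=
      Functor.congr_obj (congrArg Cat.Hom.toFunctor (α.naturality e.hom.base)) X.fiber
    exact ⟨_, ⟨eqToIso hX ≪≫ @asIso _ _ _ _ e.hom.fiber (isIso_fiber_s10 e.hom)⟩⟩
  · exact ⟨⟨Y.base, (α.app Y.base).toFunctor.objPreimage Y.fiber⟩,
      ⟨(ι G Y.base).mapIso ((α.app Y.base).toFunctor.objObjPreimageIso Y.fiber)⟩⟩

end Grothendieck

end CategoryTheory

/-- The functor `∫α : ∫F ⥤ ∫G` between Grothendieck constructions induced by a natural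
transformation `α : F ⟶ G` is an equivalence (resp. fully faithful, full, faithful,
essentially surjective) if and only if each component `α.app s : F.obj s ⥤ G.obj s` is. -/
theorem stmt10 {S : Type u₁} [Category.{v₁} S] {F G : S ⥤ Cat.{v₂, u₂}} (α : F ⟶ G) :
    ((Grothendieck.map α).IsEquivalence ↔ ∀ s : S, (α.app s).toFunctor.IsEquivalence) ∧
    (((Grothendieck.map α).Full ∧ (Grothendieck.map α).Faithful) ↔
      ∀ s : S, ((α.app s).toFunctor.Full ∧ (α.app s).toFunctor.Faithful)) ∧
    ((Grothendieck.map α).Full ↔ ∀ s : S, (α.app s).toFunctor.Full) ∧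
    ((Grothendieck.map α).Faithful ↔ ∀ s : S, (α.app s).toFunctor.Faithful) ∧
    ((Grothendieck.map α).EssSurj ↔ ∀ s : S, (α.app s).toFunctor.EssSurj) := by
  have hfull := Grothendieck.full_map_iff α
  have hfaithful := Grothendieck.faithful_map_iff α
  have hessSurj := Grothendieck.essSurj_map_iff α
  refine ⟨?_, by rw [hfull, hfaithful, forall_and], hfull, hfaithful, hessSurj⟩
  simp only [Functor.isEquivalence_iff_full_faithful_essSurj, hfull, hfaithful, hessSurj,
    forall_and]
end

section
/- Let q : Y → S and φ : X → Y be functors of categories and set p := q∘φ : X → S. Fix one of the following properties of functors: fully faithful; faithful; full; essentially surjective. Then the following are equivalent: (1) φ has the property; (2) for every functor u : T → S, the induced functor Comma(u, p) → Comma(u, q), sending (t, x, σ : u(t) → p(x)) to (t, φ(x), σ), has the property; (3) for every object s of S, the induced functor on structured arrow categories (s ↓ p) → (s ↓ q) has the property. -/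
open CategoryTheory

universe v₄ u₄ v₁ u₁ v₂ u₂ v₃ u₃

/-!
`Comma.preRight u φ q` inherits each of the four properties from `φ`. Conversely, `φ` is
recovered from the functors `s ↓ p ⥤ s ↓ q` by testing them on the structured arrows `𝟙 (p x)`
and `𝟙 (q y)`. A structured arrow category `s ↓ p` is `Comma (fromPUnit s) p`, and precomposing
`fromPUnit s` with an equivalence from a point in arbitrary universes turns it into a comma
category `Comma u p` of the kind in (2); restriction along an equivalence of the left legs
changes `Comma.preRight` only up to equivalences.
-/

namespace CategoryTheory

namespace Comma

variable {A : Type*} [Category A] {C : Type*} [Category C] {T : Type*} [Category T]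
  {X : Type*} [Category X] {Y : Type*} [Category Y]
  (F : C ⥤ A) (L : A ⥤ T) (φ : X ⥤ Y) (q : Y ⥤ T)

noncomputable def preRightIsoOfIsEquivalence [F.IsEquivalence] :
    preRight L φ q ≅ (preLeft F L (φ ⋙ q)).inv ⋙ preRight (F ⋙ L) φ q ⋙ preLeft F L q :=
  ((preLeft F L (φ ⋙ q)).asEquivalence.invFunIdAssoc (preRight L φ q)).symm

variable [F.IsEquivalence]

theorem faithful_preRight_of_isEquivalence [(preRight (F ⋙ L) φ q).Faithful] :
    (preRight L φ q).Faithful :=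
  Functor.Faithful.of_iso (preRightIsoOfIsEquivalence F L φ q).symm

theorem full_preRight_of_isEquivalence [(preRight (F ⋙ L) φ q).Full] :
    (preRight L φ q).Full :=
  Functor.Full.of_iso (preRightIsoOfIsEquivalence F L φ q).symm

theorem essSurj_preRight_of_isEquivalence [(preRight (F ⋙ L) φ q).EssSurj] :
    (preRight L φ q).EssSurj :=
  Functor.essSurj_of_iso (preRightIsoOfIsEquivalence F L φ q).symm

end Comma

namespace Functor

variable {X : Type u₁} [Category.{v₁} X] {Y : Type u₂} [Category.{v₂} Y]
  {S : Type u₃} [Category.{v₃} S] {φ : X ⥤ Y} {q : Y ⥤ S}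

theorem faithful_of_forall_structuredArrow_pre
    (h : ∀ s : S, (StructuredArrow.pre s φ q).Faithful) : φ.Faithful where
  map_injective {x x'} f g hfg := by
    let A : StructuredArrow ((φ ⋙ q).obj x) (φ ⋙ q) := .mk (𝟙 _)
    let B : StructuredArrow ((φ ⋙ q).obj x) (φ ⋙ q) := .mk ((φ ⋙ q).map f)
    have : (StructuredArrow.homMk f (by simp [A, B]) : A ⟶ B) =
        StructuredArrow.homMk g (by simp [A, B, hfg]) :=
      (StructuredArrow.pre _ φ q).map_injective (StructuredArrow.hom_ext _ _ hfg)
    exact congrArg CommaMorphism.right this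

theorem full_of_forall_structuredArrow_pre
    (h : ∀ s : S, (StructuredArrow.pre s φ q).Full) : φ.Full where
  map_surjective {x x'} f := by
    let A : StructuredArrow ((φ ⋙ q).obj x) (φ ⋙ q) := .mk (𝟙 _)
    let B : StructuredArrow ((φ ⋙ q).obj x) (φ ⋙ q) := .mk (q.map f)
    obtain ⟨f', hf'⟩ := (StructuredArrow.pre _ φ q).map_surjective
      (X := A) (Y := B) (StructuredArrow.homMk f (by simp [A, B, StructuredArrow.pre]))
    exact ⟨f'.right, congrArg CommaMorphism.right hf'⟩

theorem essSurj_of_forall_structuredArrow_pre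
    (h : ∀ s : S, (StructuredArrow.pre s φ q).EssSurj) : φ.EssSurj where
  mem_essImage y := by
    obtain ⟨A, ⟨e⟩⟩ := EssSurj.mem_essImage (F := StructuredArrow.pre _ φ q)
      (StructuredArrow.mk (𝟙 (q.obj y)))
    exact ⟨A.right, ⟨(StructuredArrow.proj _ _).mapIso e⟩⟩

variable (φ q)

theorem faithful_iff_forall_structuredArrow_pre :
    φ.Faithful ↔ ∀ s : S, (StructuredArrow.pre s φ q).Faithful :=
  ⟨fun _ _ => inferInstance, faithful_of_forall_structuredArrow_pre⟩

theorem full_iff_forall_structuredArrow_pre :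
    φ.Full ↔ ∀ s : S, (StructuredArrow.pre s φ q).Full :=
  ⟨fun _ _ => inferInstance, full_of_forall_structuredArrow_pre⟩

theorem essSurj_iff_forall_structuredArrow_pre :
    φ.EssSurj ↔ ∀ s : S, (StructuredArrow.pre s φ q).EssSurj :=
  ⟨fun _ _ => inferInstance, essSurj_of_forall_structuredArrow_pre⟩

theorem faithful_iff_forall_comma_preRight :
    φ.Faithful ↔ ∀ {T : Type u₄} [Category.{v₄} T] (u : T ⥤ S), (Comma.preRight u φ q).Faithful :=
  ⟨fun _ _ _ _ => inferInstance, fun _ => faithful_of_forall_structuredArrow_pre fun s =>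
    Comma.faithful_preRight_of_isEquivalence
      (ULiftHomULiftCategory.equiv.{v₄, u₄} (Discrete PUnit)).inverse (fromPUnit s) φ q⟩

theorem full_iff_forall_comma_preRight :
    φ.Full ↔ ∀ {T : Type u₄} [Category.{v₄} T] (u : T ⥤ S), (Comma.preRight u φ q).Full :=
  ⟨fun _ _ _ _ => inferInstance, fun _ => full_of_forall_structuredArrow_pre fun s =>
    Comma.full_preRight_of_isEquivalence
      (ULiftHomULiftCategory.equiv.{v₄, u₄} (Discrete PUnit)).inverse (fromPUnit s) φ q⟩

theorem essSurj_iff_forall_comma_preRight :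
    φ.EssSurj ↔ ∀ {T : Type u₄} [Category.{v₄} T] (u : T ⥤ S), (Comma.preRight u φ q).EssSurj :=
  ⟨fun _ _ _ _ => inferInstance, fun _ => essSurj_of_forall_structuredArrow_pre fun s =>
    Comma.essSurj_preRight_of_isEquivalence
      (ULiftHomULiftCategory.equiv.{v₄, u₄} (Discrete PUnit)).inverse (fromPUnit s) φ q⟩

end Functor

end CategoryTheory

/-- For `φ : X ⥤ Y` over `S` (via `q : Y ⥤ S`, `p := φ ⋙ q`), and each of the properties
"fully faithful", "faithful", "full", "essentially surjective", the following are
equivalent: (1) `φ` has the property; (2) for every `u : T ⥤ S` the induced functor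
`Comma u p ⥤ Comma u q` has the property; (3) for every `s : S` the induced functor
`(s ↓ p) ⥤ (s ↓ q)` on structured arrow categories has the property. -/
theorem stmt11 {X : Type u₁} [Category.{v₁} X] {Y : Type u₂} [Category.{v₂} Y]
    {S : Type u₃} [Category.{v₃} S] (φ : X ⥤ Y) (q : Y ⥤ S) :
    -- fully faithful
    (((φ.Full ∧ φ.Faithful) ↔
        ∀ {T : Type u₄} [Category.{v₄} T] (u : T ⥤ S),
          ((Comma.preRight u φ q).Full ∧ (Comma.preRight u φ q).Faithful)) ∧
      ((φ.Full ∧ φ.Faithful) ↔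
        ∀ s : S, ((StructuredArrow.pre s φ q).Full ∧ (StructuredArrow.pre s φ q).Faithful))) ∧
    -- faithful
    ((φ.Faithful ↔
        ∀ {T : Type u₄} [Category.{v₄} T] (u : T ⥤ S), (Comma.preRight u φ q).Faithful) ∧
      (φ.Faithful ↔ ∀ s : S, (StructuredArrow.pre s φ q).Faithful)) ∧
    -- full
    ((φ.Full ↔
        ∀ {T : Type u₄} [Category.{v₄} T] (u : T ⥤ S), (Comma.preRight u φ q).Full) ∧
      (φ.Full ↔ ∀ s : S, (StructuredArrow.pre s φ q).Full)) ∧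
    -- essentially surjective
    ((φ.EssSurj ↔
        ∀ {T : Type u₄} [Category.{v₄} T] (u : T ⥤ S), (Comma.preRight u φ q).EssSurj) ∧
      (φ.EssSurj ↔ ∀ s : S, (StructuredArrow.pre s φ q).EssSurj)) := by
  refine ⟨⟨?_, ?_⟩,
    ⟨Functor.faithful_iff_forall_comma_preRight φ q,
      Functor.faithful_iff_forall_structuredArrow_pre φ q⟩,
    ⟨Functor.full_iff_forall_comma_preRight φ q, Functor.full_iff_forall_structuredArrow_pre φ q⟩,
    ⟨Functor.essSurj_iff_forall_comma_preRight φ q,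
      Functor.essSurj_iff_forall_structuredArrow_pre φ q⟩⟩
  · rw [Functor.full_iff_forall_comma_preRight.{v₄, u₄} φ q,
      Functor.faithful_iff_forall_comma_preRight.{v₄, u₄} φ q]
    simp only [forall_and]
  · rw [Functor.full_iff_forall_structuredArrow_pre φ q,
      Functor.faithful_iff_forall_structuredArrow_pre φ q,
      forall_and]
end

section
/- Let D be a small category which is the union of an increasing sequence D₀ ⊆ D₁ ⊆ D₂ ⊆ ⋯ of full subcategories, let C be a cocomplete locally small category, and let f : D → C be a dense functor, meaning that the restricted Yoneda functor C → Psh(D), X ↦ Hom_C(f(−), X), is fully faithful. For each n, let fₙ : Dₙ → C be the restriction of f, let fₙ* : C → Psh(Dₙ) be the restricted Yoneda functor X ↦ Hom_C(fₙ(−), X), and let f_{n!} : Psh(Dₙ) → C be its left adjoint (the left Kan extension of fₙ along the Yoneda embedding). Then for every object X of C, the canonical morphism colim_{n ≥ 0} f_{n!}(fₙ*(X)) → X, induced by the counits of the adjunctions f_{n!} ⊣ fₙ*, is an isomorphism. -/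
open CategoryTheory Limits Opposite

universe u₂ u

namespace Stmt16

/-- The restricted Yoneda functor, with its meaning in the older Mathlib (no `ULift`). -/
def Presheaf.restrictedYoneda.{v₁, u₁, u₃} {C' : Type u₁} [Category.{v₁} C'] {ℰ : Type u₃}
    [Category.{v₁} ℰ] (A : C' ⥤ ℰ) : ℰ ⥤ C'ᵒᵖ ⥤ Type v₁ :=
  yoneda ⋙ (Functor.whiskeringLeft _ _ (Type v₁)).obj (Functor.op A)

variable {D : Type u} [SmallCategory D] (P : ℕ → D → Prop)
  {C : Type u₂} [Category.{u} C] (f : D ⥤ C)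

/-- The restriction of `f` to the `n`-th full subcategory. -/
abbrev fRes (n : ℕ) : ObjectProperty.FullSubcategory (P n) ⥤ C :=
  ObjectProperty.ι (P n) ⋙ f

variable (hmono : ∀ (n : ℕ) (d : D), P n d → P (n + 1) d)
  (Lk : ∀ n : ℕ, ((ObjectProperty.FullSubcategory (P n))ᵒᵖ ⥤ Type u) ⥤ C)
  (adj : ∀ n : ℕ, Lk n ⊣ Presheaf.restrictedYoneda (fRes P f n))

/-- The comparison map `(fRes n)* X ⟶ (fRes n)* (f_{(n+1)!} ((fRes (n+1))* X))` given by the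
unit of the `(n+1)`-st adjunction. -/
def theta (X : C) (n : ℕ) :
    (Presheaf.restrictedYoneda (fRes P f n)).obj X ⟶
      (Presheaf.restrictedYoneda (fRes P f n)).obj
        ((Lk (n + 1)).obj ((Presheaf.restrictedYoneda (fRes P f (n + 1))).obj X)) where
  app d :=
    ((adj (n + 1)).unit.app ((Presheaf.restrictedYoneda (fRes P f (n + 1))).obj X)).app
      (op ⟨d.unop.obj, hmono n d.unop.obj d.unop.property⟩)
  naturality := by
    intro d d' e
    exact
      (((adj (n + 1)).unit.app
          ((Presheaf.restrictedYoneda (fRes P f (n + 1))).obj X)).naturality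
        (Quiver.Hom.op
          (X := (⟨d'.unop.obj, hmono n d'.unop.obj d'.unop.property⟩ :
            ObjectProperty.FullSubcategory (P (n + 1))))
          (Y := ⟨d.unop.obj, hmono n d.unop.obj d.unop.property⟩)
          (ObjectProperty.homMk e.unop.hom)))

/-- The transition morphism `f_{n!}((fRes n)* X) ⟶ f_{(n+1)!}((fRes (n+1))* X)`. -/
def transition (X : C) (n : ℕ) :
    (Lk n).obj ((Presheaf.restrictedYoneda (fRes P f n)).obj X) ⟶
      (Lk (n + 1)).obj ((Presheaf.restrictedYoneda (fRes P f (n + 1))).obj X) :=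
  ((adj n).homEquiv _ _).symm (theta P f hmono Lk adj X n)

/-- The canonical cocone, with apex `X`, on the sequence
`n ↦ f_{n!}((fRes n)* X)`, whose components are the counits of the adjunctions. -/
def canonicalCocone (X : C) :
    Cocone (Functor.ofSequence (transition P f hmono Lk adj X)) :=
  Cocone.mk X
    (NatTrans.ofSequence (F := Functor.ofSequence (transition P f hmono Lk adj X))
      (G := (Functor.const ℕ).obj X)
      (fun n => (adj n).counit.app X)
      (fun n => by
        have key : theta P f hmono Lk adj X n ≫
            (Presheaf.restrictedYoneda (fRes P f n)).map ((adj (n + 1)).counit.app X) =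
              𝟙 _ := by
          refine NatTrans.ext (funext fun d => ?_)
          exact
            (NatTrans.congr_app ((adj (n + 1)).right_triangle_components X)
              (op ⟨d.unop.obj, hmono n d.unop.obj d.unop.property⟩))
        rw [Functor.ofSequence_map_homOfLE_succ]
        refine Eq.trans (?_ : transition P f hmono Lk adj X n ≫ (adj (n + 1)).counit.app X =
          (adj n).counit.app X) (Category.comp_id ((adj n).counit.app X)).symm
        rw [transition]
        apply ((adj n).homEquiv _ _).injective
        rw [Adjunction.homEquiv_naturality_right, Equiv.apply_symm_apply, key,
          Adjunction.homEquiv_unit]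
        exact ((adj n).right_triangle_components X).symm))

end Stmt16

/-!
Since `f` is dense, morphisms `X ⟶ Y` in `C` are the same as morphisms `f* X ⟶ f* Y` of
presheaves on `D`. By the adjunctions `f_{n!} ⊣ fₙ*`, a cocone with apex `Y` on the sequence
`n ↦ f_{n!} (fₙ* X)` is a family of morphisms `fₙ* X ⟶ fₙ* Y` that agree wherever two of the
`Dₙ` overlap. As `D` is the increasing union of the `Dₙ`, such a family glues to a unique
morphism `f* X ⟶ f* Y`, i.e. to a unique morphism `X ⟶ Y` through which the cocone factors.
-/

universe w

namespace CategoryTheory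

section Gluing

variable {D : Type*} [Category D] {F G : Dᵒᵖ ⥤ Type w}

theorem existsUnique_natTrans_of_directed_cover {ι : Type*} (S : ι → ObjectProperty D)
    (hdir : ∀ d d' : D, ∃ i, S i d ∧ S i d')
    (φ : ∀ i, (S i).ι.op ⋙ F ⟶ (S i).ι.op ⋙ G)
    (hφ : ∀ i j (d : D) (hi : S i d) (hj : S j d),
      (φ i).app (op ⟨d, hi⟩) = (φ j).app (op ⟨d, hj⟩)) :
    ∃! ψ : F ⟶ G, ∀ i, Functor.whiskerLeft (S i).ι.op ψ = φ i := by
  choose k hk using fun d : D => (hdir d d).imp fun _ => And.left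
  let ψ : F ⟶ G :=
    { app d := (φ (k d.unop)).app (op ⟨d.unop, hk _⟩)
      naturality d₁ d₂ e := by
        obtain ⟨i, h₁, h₂⟩ := hdir d₁.unop d₂.unop
        rw [hφ _ i _ _ h₁, hφ _ i _ _ h₂]
        exact (φ i).naturality
          (ObjectProperty.homMk (P := S i) (X := ⟨_, h₂⟩) (Y := ⟨_, h₁⟩) e.unop).op }
  refine ⟨ψ, fun i => ?_, fun ψ' hψ' => ?_⟩
  · refine NatTrans.ext (funext fun d => ?_)
    exact hφ _ _ _ _ _
  · refine NatTrans.ext (funext fun d => ?_)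
    exact NatTrans.congr_app (hψ' (k d.unop)) (op ⟨d.unop, hk _⟩)

theorem existsUnique_natTrans_of_monotone_cover (P : ℕ → ObjectProperty D) (hP : Monotone P)
    (hcover : ∀ d, ∃ n, P n d) (φ : ∀ n, (P n).ι.op ⋙ F ⟶ (P n).ι.op ⋙ G)
    (hφ : ∀ n d (hd : P n d),
      (φ (n + 1)).app (op ⟨d, hP n.le_succ d hd⟩) = (φ n).app (op ⟨d, hd⟩)) :
    ∃! ψ : F ⟶ G, ∀ n, Functor.whiskerLeft (P n).ι.op ψ = φ n := by
  have hle : ∀ n m (h : n ≤ m) d (hd : P n d),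
      (φ m).app (op ⟨d, hP h d hd⟩) = (φ n).app (op ⟨d, hd⟩) := by
    intro n m h d hd
    induction h with
    | refl => rfl
    | step _ ih => exact (hφ _ _ _).trans ih
  refine existsUnique_natTrans_of_directed_cover P (fun d d' => ?_) φ fun n m d hn hm => ?_
  · obtain ⟨n, hn⟩ := hcover d
    obtain ⟨m, hm⟩ := hcover d'
    exact ⟨max n m, hP (le_max_left n m) d hn, hP (le_max_right n m) d' hm⟩
  · rw [← hle n (max n m) (le_max_left n m), ← hle m (max n m) (le_max_right n m)]

end Gluing

theorem Adjunction.homEquiv_counit_comp {C D : Type*} [Category C] [Category D]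
    {L : C ⥤ D} {R : D ⥤ C} (adj : L ⊣ R) {X Y : D} (g : X ⟶ Y) :
    adj.homEquiv _ _ (adj.counit.app X ≫ g) = R.map g := by
  rw [Adjunction.homEquiv_unit, Functor.map_comp, ← Category.assoc,
    Adjunction.right_triangle_components, Category.id_comp]

end CategoryTheory

namespace Stmt16

variable {D : Type u} [SmallCategory D] (P : ℕ → D → Prop)
  {C : Type u₂} [Category.{u} C] (f : D ⥤ C)
  (hmono : ∀ (n : ℕ) (d : D), P n d → P (n + 1) d)
  (Lk : ∀ n : ℕ, ((ObjectProperty.FullSubcategory (P n))ᵒᵖ ⥤ Type u) ⥤ C)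
  (adj : ∀ n : ℕ, Lk n ⊣ Presheaf.restrictedYoneda (fRes P f n))

def coconeTranspose {X : C} (s : Cocone (Functor.ofSequence (transition P f hmono Lk adj X)))
    (n : ℕ) :
    (ObjectProperty.ι (P n)).op ⋙ (Presheaf.restrictedYoneda f).obj X ⟶
      (ObjectProperty.ι (P n)).op ⋙ (Presheaf.restrictedYoneda f).obj s.pt :=
  (adj n).homEquiv _ _ (s.ι.app n)

theorem canonicalCocone_ι_app_comp_eq_iff {X : C}
    (s : Cocone (Functor.ofSequence (transition P f hmono Lk adj X))) (n : ℕ) (g : X ⟶ s.pt) :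
    (canonicalCocone P f hmono Lk adj X).ι.app n ≫ g = s.ι.app n ↔
      Functor.whiskerLeft (ObjectProperty.ι (P n)).op ((Presheaf.restrictedYoneda f).map g) =
        coconeTranspose P f hmono Lk adj s n := by
  constructor
  · intro h
    rw [coconeTranspose, ← h]
    exact ((adj n).homEquiv_counit_comp g).symm
  · intro h
    exact ((adj n).homEquiv _ _).injective (((adj n).homEquiv_counit_comp g).trans h)

theorem coconeTranspose_succ_app {X : C}
    (s : Cocone (Functor.ofSequence (transition P f hmono Lk adj X))) (n : ℕ) (d : D)
    (hd : P n d) :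
    (coconeTranspose P f hmono Lk adj s (n + 1)).app (op ⟨d, hmono n d hd⟩) =
      (coconeTranspose P f hmono Lk adj s n).app (op ⟨d, hd⟩) := by
  have hs : transition P f hmono Lk adj X n ≫ s.ι.app (n + 1) = s.ι.app n := by
    have hw := s.w (homOfLE (Nat.le_succ n))
    rwa [Functor.ofSequence_map_homOfLE_succ] at hw
  rw [coconeTranspose, coconeTranspose]
  -- the transpose of `transition n` is `theta n`, whose components are those of the next unit
  erw [← hs, transition, Adjunction.homEquiv_naturality_right, Equiv.apply_symm_apply,
    Adjunction.homEquiv_unit]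
  rfl

theorem stmt16_general {D : Type u} [SmallCategory D] (P : ℕ → D → Prop)
    {C : Type u₂} [Category.{u} C] (f : D ⥤ C)
    (hmono : ∀ (n : ℕ) (d : D), P n d → P (n + 1) d)
    (hcover : ∀ d : D, ∃ n : ℕ, P n d)
    (hdense : (Presheaf.restrictedYoneda f).Full ∧ (Presheaf.restrictedYoneda f).Faithful)
    (Lk : ∀ n : ℕ, ((ObjectProperty.FullSubcategory (P n))ᵒᵖ ⥤ Type u) ⥤ C)
    (adj : ∀ n : ℕ, Lk n ⊣ Presheaf.restrictedYoneda (fRes P f n))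
    (X : C) :
    Nonempty (IsColimit (canonicalCocone P f hmono Lk adj X)) := by
  have := hdense.1
  have := hdense.2
  refine ⟨IsColimit.ofExistsUnique fun s => ?_⟩
  obtain ⟨ψ, hψ, hψ_uniq⟩ :=
    existsUnique_natTrans_of_monotone_cover P (monotone_nat_of_le_succ hmono) hcover
      (F := (Presheaf.restrictedYoneda f).obj X) (coconeTranspose P f hmono Lk adj s)
      (coconeTranspose_succ_app P f hmono Lk adj s)
  refine ⟨(Presheaf.restrictedYoneda f).preimage ψ, fun n => ?_, fun g hg => ?_⟩
  · refine (canonicalCocone_ι_app_comp_eq_iff P f hmono Lk adj s n _).2 ?_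
    erw [Functor.map_preimage]
    exact hψ n
  · refine (Presheaf.restrictedYoneda f).map_injective ?_
    erw [Functor.map_preimage]
    exact hψ_uniq _ fun n => (canonicalCocone_ι_app_comp_eq_iff P f hmono Lk adj s n g).1 (hg n)

/-- Let `D` be a small category which is the union of an increasing sequence of full
subcategories `Dₙ` (given by the predicates `P n`), let `C` be a cocomplete locally small
category and let `f : D ⥤ C` be a dense functor (the restricted Yoneda functor is fully
faithful).  Then for every object `X` of `C` the canonical morphism
`colim_n f_{n!}(fₙ* X) ⟶ X` induced by the counits of the adjunctions `f_{n!} ⊣ fₙ*` is an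
isomorphism; equivalently, the canonical cocone with apex `X` is a colimit cocone. -/
theorem stmt16 {D : Type u} [SmallCategory D] (P : ℕ → D → Prop)
    {C : Type u₂} [Category.{u} C] [HasColimitsOfSize.{u, u} C] (f : D ⥤ C)
    (hmono : ∀ (n : ℕ) (d : D), P n d → P (n + 1) d)
    (hcover : ∀ d : D, ∃ n : ℕ, P n d)
    (hdense : (Presheaf.restrictedYoneda f).Full ∧ (Presheaf.restrictedYoneda f).Faithful)
    (Lk : ∀ n : ℕ, ((ObjectProperty.FullSubcategory (P n))ᵒᵖ ⥤ Type u) ⥤ C)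
    (adj : ∀ n : ℕ, Lk n ⊣ Presheaf.restrictedYoneda (fRes P f n))
    (X : C) :
    Nonempty (IsColimit (canonicalCocone P f hmono Lk adj X)) :=
  stmt16_general P f hmono hcover hdense Lk adj X

end Stmt16
end
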